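/- arXiv:2003.05011 — 8 statements merged into one kernel-verified Lean document; each statement's English description precedes it below -/
import Mathlib

section
/- Let s' < s < 0. Then there are constants c, C > 0 depending only on s, s' such that for every real κ ≥ 1 and every tempered distribution q with finite H^s_κ norm: c ‖q‖²_{H^s_κ} ≤ ∫_κ^∞ ϰ^{2(s-s')} ‖q‖²_{H^{s'}_ϰ} (dϰ/ϰ) ≤ C ‖q‖²_{H^s_κ}. -/
/-!
By Tonelli, the middle integral equals `∫ W(ξ) ‖F ξ‖² dξ` with the weight
`W(ξ) = ∫_κ^∞ ϰ^(2(s-s')-1) (4ϰ² + ξ²)^s' dϰ`, so it suffices to show `W(ξ) ≍ (4κ² + ξ²)^s`.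
Split the ϰ-integral at `R = √(4κ² + ξ²)`: for `ϰ ≤ R` the factor `(4ϰ² + ξ²)^s'` is at most
`R^(2s')` and the remaining `∫_0^R ϰ^(2(s-s')-1)` converges because `s' < s`; for `ϰ > R` that
factor lies between `(5ϰ²)^s'` and `(ϰ²)^s'`, leaving `∫_R^∞ ϰ^(2s-1) = R^(2s)/(-2s)`.
-/

open MeasureTheory Set

theorem sq_rpow {x : ℝ} (hx : 0 ≤ x) (p : ℝ) : (x ^ 2) ^ p = x ^ (2 * p) := by
  rw [← Real.rpow_natCast, ← Real.rpow_mul hx, Nat.cast_ofNat]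

theorem rpow_mul_sq_rpow {x : ℝ} (hx : 0 < x) (s s' : ℝ) :
    x ^ (2 * (s - s') - 1) * (x ^ 2) ^ s' = x ^ (2 * s - 1) := by
  rw [sq_rpow hx.le, ← Real.rpow_add hx]
  ring_nf

theorem lintegral_Ioi_rpow_of_lt {p r : ℝ} (hp : p < -1) (hr : 0 < r) :
    ∫⁻ x in Ioi r, ENNReal.ofReal (x ^ p) = ENNReal.ofReal (-r ^ (p + 1) / (p + 1)) := by
  rw [← integral_Ioi_rpow_of_lt hp hr]
  exact (ofReal_integral_eq_lintegral_ofReal (integrableOn_Ioi_rpow_of_lt hp hr)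
    (ae_restrict_of_forall_mem measurableSet_Ioi fun x hx =>
      Real.rpow_nonneg (hr.trans hx).le _)).symm

theorem lintegral_Ioc_zero_rpow {p r : ℝ} (hp : -1 < p) (hr : 0 ≤ r) :
    ∫⁻ x in Ioc 0 r, ENNReal.ofReal (x ^ p) = ENNReal.ofReal (r ^ (p + 1) / (p + 1)) := by
  have hint : IntegrableOn (fun x : ℝ => x ^ p) (Ioc 0 r) :=
    (intervalIntegrable_iff_integrableOn_Ioc_of_le hr).1
      (intervalIntegral.intervalIntegrable_rpow' hp)
  rw [← ofReal_integral_eq_lintegral_ofReal hint (ae_restrict_of_forall_mem measurableSet_Ioc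
      fun x hx => Real.rpow_nonneg hx.1.le _), ← intervalIntegral.integral_of_le hr,
    integral_rpow (Or.inl hp), Real.zero_rpow (by linarith), sub_zero]

theorem exists_gt_sq_eq_four_mul_sq_add_sq (κ ξ : ℝ) (hκ : 0 < κ) :
    ∃ R, κ < R ∧ R ^ 2 = 4 * κ ^ 2 + ξ ^ 2 := by
  refine ⟨√(4 * κ ^ 2 + ξ ^ 2), ?_, Real.sq_sqrt (by positivity)⟩
  rw [Real.lt_sqrt hκ.le]
  nlinarith

section Kernel

variable {s s' κ : ℝ}

theorem le_lintegral_Ioi_rpow_mul_rpow (hs' : s' ≤ 0) (hs : s < 0) (hκ : 0 < κ) (ξ : ℝ) :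
    ENNReal.ofReal (5 ^ s' / (-(2 * s)) * (4 * κ ^ 2 + ξ ^ 2) ^ s) ≤
      ∫⁻ ϰ in Ioi κ, ENNReal.ofReal (ϰ ^ (2 * (s - s') - 1) * (4 * ϰ ^ 2 + ξ ^ 2) ^ s') := by
  obtain ⟨R, hκR, hR2⟩ := exists_gt_sq_eq_four_mul_sq_add_sq κ ξ hκ
  have hR : 0 < R := hκ.trans hκR
  have hpointwise : ∀ ϰ ∈ Ioi R,
      5 ^ s' * ϰ ^ (2 * s - 1) ≤ ϰ ^ (2 * (s - s') - 1) * (4 * ϰ ^ 2 + ξ ^ 2) ^ s' := by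
    intro ϰ (hϰ : R < ϰ)
    have hϰ0 : 0 < ϰ := hR.trans hϰ
    have hle : 4 * ϰ ^ 2 + ξ ^ 2 ≤ 5 * ϰ ^ 2 := by nlinarith
    calc 5 ^ s' * ϰ ^ (2 * s - 1) = ϰ ^ (2 * (s - s') - 1) * (5 * ϰ ^ 2) ^ s' := by
          rw [Real.mul_rpow (by norm_num) (sq_nonneg ϰ), mul_left_comm, rpow_mul_sq_rpow hϰ0]
      _ ≤ ϰ ^ (2 * (s - s') - 1) * (4 * ϰ ^ 2 + ξ ^ 2) ^ s' := by
          gcongr ?_ * ?_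
          exact Real.rpow_le_rpow_of_nonpos (by positivity) hle hs'
  calc ENNReal.ofReal (5 ^ s' / (-(2 * s)) * (4 * κ ^ 2 + ξ ^ 2) ^ s)
      = ∫⁻ ϰ in Ioi R, ENNReal.ofReal (5 ^ s' * ϰ ^ (2 * s - 1)) := by
        simp_rw [ENNReal.ofReal_mul (by positivity : (0 : ℝ) ≤ 5 ^ s')]
        rw [lintegral_const_mul' _ _ ENNReal.ofReal_ne_top,
          lintegral_Ioi_rpow_of_lt (by linarith) hR, ← ENNReal.ofReal_mul (by positivity),
          ← hR2, sq_rpow hR.le, show 2 * s - 1 + 1 = 2 * s by ring]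
        ring_nf
    _ ≤ ∫⁻ ϰ in Ioi R, ENNReal.ofReal (ϰ ^ (2 * (s - s') - 1) * (4 * ϰ ^ 2 + ξ ^ 2) ^ s') :=
        setLIntegral_mono' measurableSet_Ioi fun ϰ hϰ => ENNReal.ofReal_le_ofReal (hpointwise ϰ hϰ)
    _ ≤ _ := lintegral_mono_set (Ioi_subset_Ioi hκR.le)

theorem lintegral_Ioi_rpow_mul_rpow_le (h1 : s' < s) (h2 : s < 0) (hκ : 0 < κ) (ξ : ℝ) :
    ∫⁻ ϰ in Ioi κ, ENNReal.ofReal (ϰ ^ (2 * (s - s') - 1) * (4 * ϰ ^ 2 + ξ ^ 2) ^ s') ≤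
      ENNReal.ofReal ((1 / (2 * (s - s')) + 1 / (-(2 * s))) * (4 * κ ^ 2 + ξ ^ 2) ^ s) := by
  obtain ⟨R, hκR, hR2⟩ := exists_gt_sq_eq_four_mul_sq_add_sq κ ξ hκ
  have hR : 0 < R := hκ.trans hκR
  have hnear : ∫⁻ ϰ in Ioc κ R,
      ENNReal.ofReal (ϰ ^ (2 * (s - s') - 1) * (4 * ϰ ^ 2 + ξ ^ 2) ^ s') ≤
        ENNReal.ofReal (1 / (2 * (s - s')) * (R ^ 2) ^ s) := by
    have hpointwise : ∀ ϰ ∈ Ioc κ R, ϰ ^ (2 * (s - s') - 1) * (4 * ϰ ^ 2 + ξ ^ 2) ^ s' ≤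
        (R ^ 2) ^ s' * ϰ ^ (2 * (s - s') - 1) := by
      intro ϰ hϰ
      rw [mul_comm]
      gcongr ?_ * _
      · exact Real.rpow_nonneg (hκ.trans hϰ.1).le _
      · rw [hR2]
        exact Real.rpow_le_rpow_of_nonpos (by positivity) (by nlinarith [hϰ.1]) (by linarith)
    calc _ ≤ ∫⁻ ϰ in Ioc κ R, ENNReal.ofReal ((R ^ 2) ^ s' * ϰ ^ (2 * (s - s') - 1)) :=
          setLIntegral_mono' measurableSet_Ioc fun ϰ hϰ =>
            ENNReal.ofReal_le_ofReal (hpointwise ϰ hϰ)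
      _ ≤ ∫⁻ ϰ in Ioc 0 R, ENNReal.ofReal ((R ^ 2) ^ s' * ϰ ^ (2 * (s - s') - 1)) :=
          lintegral_mono_set (Ioc_subset_Ioc_left hκ.le)
      _ = ENNReal.ofReal (1 / (2 * (s - s')) * (R ^ 2) ^ s) := by
          simp_rw [ENNReal.ofReal_mul (by positivity : (0 : ℝ) ≤ (R ^ 2) ^ s')]
          rw [lintegral_const_mul' _ _ ENNReal.ofReal_ne_top,
            lintegral_Ioc_zero_rpow (by linarith) hR.le, ← ENNReal.ofReal_mul (by positivity),
            show 2 * (s - s') - 1 + 1 = 2 * (s - s') by ring, sq_rpow hR.le, sq_rpow hR.le,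
            mul_div_assoc', ← Real.rpow_add hR, show 2 * s' + 2 * (s - s') = 2 * s by ring]
          ring_nf
  have hfar : ∫⁻ ϰ in Ioi R,
      ENNReal.ofReal (ϰ ^ (2 * (s - s') - 1) * (4 * ϰ ^ 2 + ξ ^ 2) ^ s') ≤
        ENNReal.ofReal (1 / (-(2 * s)) * (R ^ 2) ^ s) := by
    have hpointwise : ∀ ϰ ∈ Ioi R,
        ϰ ^ (2 * (s - s') - 1) * (4 * ϰ ^ 2 + ξ ^ 2) ^ s' ≤ ϰ ^ (2 * s - 1) := by
      intro ϰ (hϰ : R < ϰ)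
      have hϰ0 : 0 < ϰ := hR.trans hϰ
      rw [← rpow_mul_sq_rpow hϰ0 s s']
      gcongr ?_ * ?_
      exact Real.rpow_le_rpow_of_nonpos (by positivity) (by nlinarith) (by linarith)
    calc _ ≤ ∫⁻ ϰ in Ioi R, ENNReal.ofReal (ϰ ^ (2 * s - 1)) :=
          setLIntegral_mono' measurableSet_Ioi fun ϰ hϰ =>
            ENNReal.ofReal_le_ofReal (hpointwise ϰ hϰ)
      _ = ENNReal.ofReal (1 / (-(2 * s)) * (R ^ 2) ^ s) := by
          rw [lintegral_Ioi_rpow_of_lt (by linarith) hR, sq_rpow hR.le,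
            show 2 * s - 1 + 1 = 2 * s by ring]
          ring_nf
  rw [← Ioc_union_Ioi_eq_Ioi hκR.le, lintegral_union measurableSet_Ioi Ioc_disjoint_Ioi_same,
    add_mul, ← hR2, ENNReal.ofReal_add
      (mul_nonneg (one_div_nonneg.2 (by linarith)) (by positivity))
      (mul_nonneg (one_div_nonneg.2 (by linarith)) (by positivity))]
  exact add_le_add hnear hfar

end Kernel

section Tonelli

variable {α β : Type*} [MeasurableSpace α] [MeasurableSpace β] {μ : Measure α} {ν : Measure β}
  [SFinite μ] [SFinite ν] {k : α → β → ℝ} {g : β → ℝ}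

theorem lintegral_ofReal_integral_mul_eq (hk : ∀ᵐ x ∂μ, ∀ ξ, 0 ≤ k x ξ)
    (hkm : Measurable (Function.uncurry k)) (hg : ∀ ξ, 0 ≤ g ξ) (hgm : AEMeasurable g ν)
    (hint : ∀ᵐ x ∂μ, Integrable (fun ξ => k x ξ * g ξ) ν) :
    ∫⁻ x, ENNReal.ofReal (∫ ξ, k x ξ * g ξ ∂ν) ∂μ =
      ∫⁻ ξ, (∫⁻ x, ENNReal.ofReal (k x ξ) ∂μ) * ENNReal.ofReal (g ξ) ∂ν := by
  calc ∫⁻ x, ENNReal.ofReal (∫ ξ, k x ξ * g ξ ∂ν) ∂μ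
      = ∫⁻ x, ∫⁻ ξ, ENNReal.ofReal (k x ξ) * ENNReal.ofReal (g ξ) ∂ν ∂μ := by
        refine lintegral_congr_ae ?_
        filter_upwards [hk, hint] with x hkx hx
        rw [ofReal_integral_eq_lintegral_ofReal hx
          (ae_of_all _ fun ξ => mul_nonneg (hkx ξ) (hg ξ))]
        simp_rw [ENNReal.ofReal_mul (hkx _)]
    _ = ∫⁻ ξ, ∫⁻ x, ENNReal.ofReal (k x ξ) * ENNReal.ofReal (g ξ) ∂μ ∂ν :=
        lintegral_lintegral_swap
          (hkm.ennreal_ofReal.aemeasurable.mul hgm.ennreal_ofReal.comp_snd)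
    _ = _ := lintegral_congr fun ξ => lintegral_mul_const' _ _ ENNReal.ofReal_ne_top

theorem integral_integral_mul_bounds {w : β → ℝ} {c C : ℝ} (hc : 0 ≤ c) (hC : 0 ≤ C)
    (hw : ∀ ξ, 0 ≤ w ξ) (hwg : Integrable (fun ξ => w ξ * g ξ) ν)
    (hk : ∀ᵐ x ∂μ, ∀ ξ, 0 ≤ k x ξ) (hkm : Measurable (Function.uncurry k))
    (hg : ∀ ξ, 0 ≤ g ξ) (hgm : AEMeasurable g ν)
    (hint : ∀ᵐ x ∂μ, Integrable (fun ξ => k x ξ * g ξ) ν)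
    (hlow : ∀ ξ, ENNReal.ofReal (c * w ξ) ≤ ∫⁻ x, ENNReal.ofReal (k x ξ) ∂μ)
    (hup : ∀ ξ, ∫⁻ x, ENNReal.ofReal (k x ξ) ∂μ ≤ ENNReal.ofReal (C * w ξ)) :
    c * ∫ ξ, w ξ * g ξ ∂ν ≤ ∫ x, ∫ ξ, k x ξ * g ξ ∂ν ∂μ ∧
      ∫ x, ∫ ξ, k x ξ * g ξ ∂ν ∂μ ≤ C * ∫ ξ, w ξ * g ξ ∂ν := by
  have hwg0 : ∀ ξ, 0 ≤ w ξ * g ξ := fun ξ => mul_nonneg (hw ξ) (hg ξ)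
  have hweighted : ∀ a, 0 ≤ a → ∫⁻ ξ, ENNReal.ofReal (a * w ξ) * ENNReal.ofReal (g ξ) ∂ν =
      ENNReal.ofReal (a * ∫ ξ, w ξ * g ξ ∂ν) := fun a ha => by
    rw [← integral_const_mul, ofReal_integral_eq_lintegral_ofReal (hwg.const_mul a)
      (ae_of_all _ fun ξ => mul_nonneg ha (hwg0 ξ))]
    simp_rw [← ENNReal.ofReal_mul' (hg _), mul_assoc]
  have hL := lintegral_ofReal_integral_mul_eq hk hkm hg hgm hint
  have hlowL : ENNReal.ofReal (c * ∫ ξ, w ξ * g ξ ∂ν) ≤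
      ∫⁻ x, ENNReal.ofReal (∫ ξ, k x ξ * g ξ ∂ν) ∂μ := by
    rw [hL, ← hweighted c hc]
    exact lintegral_mono fun ξ => mul_le_mul_left (hlow ξ) _
  have hupL : ∫⁻ x, ENNReal.ofReal (∫ ξ, k x ξ * g ξ ∂ν) ∂μ ≤
      ENNReal.ofReal (C * ∫ ξ, w ξ * g ξ ∂ν) := by
    rw [hL, ← hweighted C hC]
    exact lintegral_mono fun ξ => mul_le_mul_left (hup ξ) _
  have hI : ∫ x, ∫ ξ, k x ξ * g ξ ∂ν ∂μ =
      (∫⁻ x, ENNReal.ofReal (∫ ξ, k x ξ * g ξ ∂ν) ∂μ).toReal :=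
    integral_eq_lintegral_of_nonneg_ae
      (hk.mono fun x hkx => integral_nonneg fun ξ => mul_nonneg (hkx ξ) (hg ξ))
      (hkm.aestronglyMeasurable.mul hgm.comp_snd.aestronglyMeasurable).integral_prod_right'
  rw [hI]
  exact ⟨(ENNReal.ofReal_le_iff_le_toReal (ne_top_of_le_ne_top ENNReal.ofReal_ne_top hupL)).1
      hlowL,
    ENNReal.toReal_le_of_le_ofReal (mul_nonneg hC (integral_nonneg hwg0)) hupL⟩

end Tonelli

theorem aemeasurable_of_integrable_mul {β : Type*} [MeasurableSpace β] {ν : Measure β}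
    {w g : β → ℝ} (hw : Measurable w) (hw0 : ∀ ξ, w ξ ≠ 0)
    (hwg : Integrable (fun ξ => w ξ * g ξ) ν) : AEMeasurable g ν := by
  have hg : g = fun ξ => (w ξ)⁻¹ * (w ξ * g ξ) :=
    funext fun ξ => (inv_mul_cancel_left₀ (hw0 ξ) _).symm
  rw [hg]
  exact hw.inv.aemeasurable.mul hwg.aemeasurable

theorem rpow_le_rpow_of_one_le_of_le {x y p q : ℝ} (hx : 1 ≤ x) (hxy : x ≤ y) (hpq : p ≤ q)
    (hq : q ≤ 0) : y ^ p ≤ x ^ q :=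
  (Real.rpow_le_rpow_of_exponent_le (hx.trans hxy) hpq).trans
    (Real.rpow_le_rpow_of_nonpos (by linarith) hxy hq)

theorem equiv_norm_integral (s' s : ℝ) (h1 : s' < s) (h2 : s < 0) :
    ∃ c C : ℝ, 0 < c ∧ 0 < C ∧ ∀ κ : ℝ, 1 ≤ κ → ∀ F : ℝ → ℂ,
      Integrable (fun ξ : ℝ => (4 * κ ^ 2 + ξ ^ 2) ^ s * ‖F ξ‖ ^ 2) →
      c * (∫ ξ : ℝ, (4 * κ ^ 2 + ξ ^ 2) ^ s * ‖F ξ‖ ^ 2) ≤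
        (∫ ϰ in Set.Ioi κ,
          ϰ ^ (2 * (s - s')) * (∫ ξ : ℝ, (4 * ϰ ^ 2 + ξ ^ 2) ^ s' * ‖F ξ‖ ^ 2) / ϰ) ∧
      (∫ ϰ in Set.Ioi κ,
          ϰ ^ (2 * (s - s')) * (∫ ξ : ℝ, (4 * ϰ ^ 2 + ξ ^ 2) ^ s' * ‖F ξ‖ ^ 2) / ϰ) ≤
        C * ∫ ξ : ℝ, (4 * κ ^ 2 + ξ ^ 2) ^ s * ‖F ξ‖ ^ 2 := by
  have hc : (0 : ℝ) < 5 ^ s' / (-(2 * s)) := div_pos (by positivity) (by linarith)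
  have hC : 0 < 1 / (2 * (s - s')) + 1 / (-(2 * s)) :=
    add_pos (one_div_pos.2 (by linarith)) (one_div_pos.2 (by linarith))
  refine ⟨_, _, hc, hC, fun κ hκ F hF => ?_⟩
  have hκ0 : 0 < κ := by linarith
  have hF_meas : AEMeasurable (fun ξ => ‖F ξ‖ ^ 2) :=
    aemeasurable_of_integrable_mul (by fun_prop) (fun ξ => by positivity) hF
  have hinner : ∀ ϰ ∈ Ioi κ, Integrable
      (fun ξ => ϰ ^ (2 * (s - s') - 1) * (4 * ϰ ^ 2 + ξ ^ 2) ^ s' * ‖F ξ‖ ^ 2) := by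
    intro ϰ hϰ
    refine (hF.const_mul (ϰ ^ (2 * (s - s') - 1))).mono (by fun_prop) (ae_of_all _ fun ξ => ?_)
    have hϰ0 : 0 < ϰ := hκ0.trans hϰ
    rw [Real.norm_of_nonneg (by positivity), Real.norm_of_nonneg (by positivity), mul_assoc]
    gcongr
    exact rpow_le_rpow_of_one_le_of_le (by nlinarith) (by nlinarith [mem_Ioi.1 hϰ]) h1.le h2.le
  have houter : (∫ ϰ in Ioi κ,
      ϰ ^ (2 * (s - s')) * (∫ ξ, (4 * ϰ ^ 2 + ξ ^ 2) ^ s' * ‖F ξ‖ ^ 2) / ϰ) =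
        ∫ ϰ in Ioi κ, ∫ ξ, ϰ ^ (2 * (s - s') - 1) * (4 * ϰ ^ 2 + ξ ^ 2) ^ s' * ‖F ξ‖ ^ 2 := by
    refine setIntegral_congr_fun measurableSet_Ioi fun ϰ hϰ => ?_
    simp_rw [mul_assoc, integral_const_mul, Real.rpow_sub (hκ0.trans hϰ), Real.rpow_one]
    ring
  rw [houter]
  exact integral_integral_mul_bounds hc.le hC.le (fun ξ => by positivity) hF
    (ae_restrict_of_forall_mem measurableSet_Ioi fun ϰ hϰ ξ => by
      have := hκ0.trans hϰ
      positivity)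
    (by fun_prop)
    (fun ξ => by positivity) hF_meas (ae_restrict_of_forall_mem measurableSet_Ioi hinner)
    (le_lintegral_Ioi_rpow_mul_rpow (by linarith) h2 hκ0)
    (lintegral_Ioi_rpow_mul_rpow_le h1 h2 hκ0)
end

section
/- Let -1/2 < s < 0 and set α := 1/4 - s/2. Then there is a constant C = C(s) such that for all ξ ∈ ℝ: ∫_ℝ (1 + (ξ + η)²)^{-α} (1 + η²)^{-α} dη ≤ C (4 + ξ²)^s. -/
open MeasureTheory Real Set

private lemma kce_cont (a : ℝ) : Continuous (fun η : ℝ => (1 + η ^ 2) ^ (-a)) := by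
  apply Continuous.rpow_const (by continuity)
  intro x; left; positivity

private lemma kce_sq_rpow {c : ℝ} (hc : 0 < c) (a : ℝ) : (c ^ 2) ^ a = c ^ (2 * a) := by
  rw [← Real.rpow_natCast c 2, ← Real.rpow_mul hc.le]
  norm_num

private lemma kce_mul_self {x : ℝ} (hx : 0 < x) (a : ℝ) :
    x ^ (-a) * x ^ (-a) = x ^ (-(2 * a)) := by
  rw [← Real.rpow_add hx]; ring_nf

private lemma kce_int2 {b : ℝ} (hb : 1 / 2 < b) :
    Integrable (fun η : ℝ => (1 + η ^ 2) ^ (-b)) := by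
  have h := integrable_rpow_neg_one_add_norm_sq (E := ℝ) (μ := volume) (r := 2 * b)
    (by simp; linarith)
  have : ∀ η : ℝ, ((1 : ℝ) + ‖η‖ ^ 2) ^ (-(2 * b) / 2) = (1 + η ^ 2) ^ (-b) := by
    intro η
    rw [Real.norm_eq_abs, sq_abs]
    congr 1
    ring
  simpa [Real.norm_eq_abs, sq_abs, show -(2 * b) / 2 = -b by ring] using h

private lemma kce_tail {b R : ℝ} (hb : 1 / 2 < b) (hR : 0 < R) :
    ∫ η in Ioi R, (1 + η ^ 2) ^ (-b) ≤ R ^ (1 - 2 * b) / (2 * b - 1) := by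
  have h1 : IntegrableOn (fun η : ℝ => (1 + η ^ 2) ^ (-b)) (Ioi R) :=
    (kce_int2 hb).integrableOn
  have h2 : IntegrableOn (fun η : ℝ => η ^ (-(2 * b))) (Ioi R) :=
    integrableOn_Ioi_rpow_of_lt (by linarith) hR
  have hmono : ∫ η in Ioi R, (1 + η ^ 2) ^ (-b) ≤ ∫ η in Ioi R, η ^ (-(2 * b)) := by
    apply setIntegral_mono_on h1 h2 measurableSet_Ioi
    intro x hx
    have hx0 : 0 < x := hR.trans hx
    have h3 : (1 + x ^ 2) ^ (-b) ≤ (x ^ 2) ^ (-b) :=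
      Real.rpow_le_rpow_of_nonpos (by positivity) (by linarith) (by linarith)
    calc (1 + x ^ 2) ^ (-b) ≤ (x ^ 2) ^ (-b) := h3
      _ = x ^ (-(2 * b)) := by rw [kce_sq_rpow hx0]; ring_nf
  have hcomp : ∫ η in Ioi R, η ^ (-(2 * b)) = -R ^ (-(2 * b) + 1) / (-(2 * b) + 1) :=
    integral_Ioi_rpow_of_lt (by linarith) hR
  rw [hcomp] at hmono
  calc ∫ η in Ioi R, (1 + η ^ 2) ^ (-b) ≤ -R ^ (-(2 * b) + 1) / (-(2 * b) + 1) := hmono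
    _ = R ^ (1 - 2 * b) / (2 * b - 1) := by
        rw [show -(2 * b) + 1 = 1 - 2 * b by ring]
        rw [show (1 : ℝ) - 2 * b = -(2 * b - 1) by ring, div_neg, neg_div, neg_neg]

private lemma kce_bulk {a R : ℝ} (ha0 : 0 < a) (ha1 : a < 1 / 2) (hR : 0 < R) :
    ∫ η in Ioo (-R) R, (1 + η ^ 2) ^ (-a) ≤ 2 * (R ^ (1 - 2 * a) / (1 - 2 * a)) := by
  have hcont := kce_cont a
  have hii : ∀ u v : ℝ, IntervalIntegrable (fun η : ℝ => (1 + η ^ 2) ^ (-a)) volume u v :=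
    fun u v => hcont.intervalIntegrable u v
  have e1 : ∫ η in Ioo (-R) R, (1 + η ^ 2) ^ (-a)
      = ∫ η in (-R)..R, (1 + η ^ 2) ^ (-a) := by
    rw [intervalIntegral.integral_of_le (by linarith), integral_Ioc_eq_integral_Ioo]
  have e2 : ∫ η in (-R)..(0:ℝ), (1 + η ^ 2) ^ (-a) = ∫ η in (0:ℝ)..R, (1 + η ^ 2) ^ (-a) := by
    have := intervalIntegral.integral_comp_neg (a := (0:ℝ)) (b := R)
      (fun η : ℝ => (1 + η ^ 2) ^ (-a))
    simp only [neg_zero] at this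
    rw [← this]
    congr 1
    funext x
    rw [neg_pow]
    ring_nf
  have e3 : ∫ η in (-R)..R, (1 + η ^ 2) ^ (-a)
      = (∫ η in (-R)..(0:ℝ), (1 + η ^ 2) ^ (-a)) + ∫ η in (0:ℝ)..R, (1 + η ^ 2) ^ (-a) :=
    (intervalIntegral.integral_add_adjacent_intervals (hii _ _) (hii _ _)).symm
  have key : ∫ η in (0:ℝ)..R, (1 + η ^ 2) ^ (-a) ≤ R ^ (1 - 2 * a) / (1 - 2 * a) := by
    have h2 : IntegrableOn (fun η : ℝ => η ^ (-(2 * a))) (Ioo 0 R) :=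
      ((intervalIntegral.intervalIntegrable_rpow' (a := 0) (b := R) (by linarith)).1).mono_set
        Ioo_subset_Ioc_self
    have h1 : IntegrableOn (fun η : ℝ => (1 + η ^ 2) ^ (-a)) (Ioo 0 R) :=
      (hcont.integrableOn_Icc).mono_set Ioo_subset_Icc_self
    have hmono : ∫ η in Ioo 0 R, (1 + η ^ 2) ^ (-a) ≤ ∫ η in Ioo 0 R, η ^ (-(2 * a)) := by
      apply setIntegral_mono_on h1 h2 measurableSet_Ioo
      intro x hx
      have hx0 : 0 < x := hx.1
      calc (1 + x ^ 2) ^ (-a) ≤ (x ^ 2) ^ (-a) :=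
            Real.rpow_le_rpow_of_nonpos (by positivity) (by linarith) (by linarith)
        _ = x ^ (-(2 * a)) := by rw [kce_sq_rpow hx0]; ring_nf
    have hcomp : ∫ η in (0:ℝ)..R, η ^ (-(2 * a))
        = (R ^ (-(2 * a) + 1) - (0:ℝ) ^ (-(2 * a) + 1)) / (-(2 * a) + 1) :=
      integral_rpow (Or.inl (by linarith))
    rw [intervalIntegral.integral_of_le hR.le, integral_Ioc_eq_integral_Ioo]
    calc ∫ η in Ioo 0 R, (1 + η ^ 2) ^ (-a) ≤ ∫ η in Ioo 0 R, η ^ (-(2 * a)) := hmono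
      _ = ∫ η in (0:ℝ)..R, η ^ (-(2 * a)) := by
          rw [intervalIntegral.integral_of_le hR.le, integral_Ioc_eq_integral_Ioo]
      _ = (R ^ (-(2 * a) + 1) - (0:ℝ) ^ (-(2 * a) + 1)) / (-(2 * a) + 1) := hcomp
      _ = R ^ (1 - 2 * a) / (1 - 2 * a) := by
          rw [Real.zero_rpow (by intro h; nlinarith [h] : -(2 * a) + 1 ≠ 0)]
          rw [show -(2 * a) + 1 = 1 - 2 * a by ring]
          ring
  rw [e1, e3, e2]
  linarith

private noncomputable def kceF (a u : ℝ) : ℝ := (1 + u ^ 2) ^ (-a)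

private lemma kceF_nonneg (a u : ℝ) : 0 ≤ kceF a u := Real.rpow_nonneg (by positivity) _

private lemma kce_tail_Ici {b R : ℝ} (hb : 1 / 2 < b) (hR : 0 < R) :
    ∫ η in Ici R, kceF b η ≤ R ^ (1 - 2 * b) / (2 * b - 1) := by
  rw [integral_Ici_eq_integral_Ioi]
  exact kce_tail hb hR

private lemma kce_tail_Iic {b R : ℝ} (hb : 1 / 2 < b) (hR : 0 < R) :
    ∫ η in Iic (-R), kceF b η ≤ R ^ (1 - 2 * b) / (2 * b - 1) := by
  rw [← integral_comp_neg_Ioi]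
  have : ∀ x : ℝ, kceF b (-x) = kceF b x := by
    intro x; unfold kceF; rw [neg_pow]; ring_nf
  simp_rw [this]
  exact kce_tail hb hR

private lemma kce_decay {a ξ : ℝ} (ha1 : 1 / 4 < a) (ha2 : a < 1 / 2) (hξ : 1 ≤ ξ) :
    (∫ η : ℝ, (1 + (ξ + η) ^ 2) ^ (-a) * (1 + η ^ 2) ^ (-a))
      ≤ (ξ / 2) ^ (1 - 4 * a) * (4 / (1 - 2 * a) + 4 / (4 * a - 1)) := by
  set c : ℝ := ξ / 2 with hc_def
  have hc : 0 < c := by rw [hc_def]; linarith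
  have hξc : ξ = 2 * c := by rw [hc_def]; ring
  have ha2' : (1:ℝ)/2 < 2 * a := by linarith
  -- integrability of pieces
  have hFIoo : IntegrableOn (kceF a) (Ioo (-c) c) :=
    ((kce_cont a).integrableOn_Icc).mono_set Ioo_subset_Icc_self
  have hind : Integrable ((Ioo (-c) c).indicator (kceF a)) :=
    hFIoo.integrable_indicator measurableSet_Ioo
  have hG_int : Integrable (kceF (2 * a)) := kce_int2 ha2'
  have hT1 : Integrable (fun η : ℝ => c ^ (-(2*a)) * (Ioo (-c) c).indicator (kceF a) η) :=
    hind.const_mul _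
  have hT2 : Integrable (fun η : ℝ => c ^ (-(2*a)) * (Ioo (-c) c).indicator (kceF a) (ξ + η)) :=
    (hind.comp_add_left ξ).const_mul _
  have hT3 : Integrable (fun η : ℝ => (Ici c).indicator (kceF (2*a)) η) :=
    hG_int.indicator measurableSet_Ici
  have hT4 : Integrable (fun η : ℝ => (Iic (-c)).indicator (kceF (2*a)) η) :=
    hG_int.indicator measurableSet_Iic
  have hT5 : Integrable (fun η : ℝ => (Ici c).indicator (kceF (2*a)) (ξ + η)) :=
    (hG_int.indicator measurableSet_Ici).comp_add_left ξ
  have hT6 : Integrable (fun η : ℝ => (Iic (-c)).indicator (kceF (2*a)) (ξ + η)) :=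
    (hG_int.indicator measurableSet_Iic).comp_add_left ξ
  have hmaj : Integrable (fun η : ℝ =>
      (c ^ (-(2*a)) * (Ioo (-c) c).indicator (kceF a) η
        + c ^ (-(2*a)) * (Ioo (-c) c).indicator (kceF a) (ξ + η))
      + (((Ici c).indicator (kceF (2*a)) η + (Iic (-c)).indicator (kceF (2*a)) η)
        + ((Ici c).indicator (kceF (2*a)) (ξ + η) + (Iic (-c)).indicator (kceF (2*a)) (ξ + η)))) :=
    (hT1.add hT2).add ((hT3.add hT4).add (hT5.add hT6))
  -- pointwise bound
  have hpt : ∀ η : ℝ, (1 + (ξ + η) ^ 2) ^ (-a) * (1 + η ^ 2) ^ (-a) ≤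
      (c ^ (-(2*a)) * (Ioo (-c) c).indicator (kceF a) η
        + c ^ (-(2*a)) * (Ioo (-c) c).indicator (kceF a) (ξ + η))
      + (((Ici c).indicator (kceF (2*a)) η + (Iic (-c)).indicator (kceF (2*a)) η)
        + ((Ici c).indicator (kceF (2*a)) (ξ + η) + (Iic (-c)).indicator (kceF (2*a)) (ξ + η))) := by
    intro η
    have hind_nn : ∀ (S : Set ℝ) (b : ℝ) (u : ℝ), 0 ≤ S.indicator (kceF b) u :=
      fun S b u => Set.indicator_nonneg (fun x _ => kceF_nonneg b x) u
    have hcn : (0:ℝ) ≤ c ^ (-(2*a)) := Real.rpow_nonneg hc.le _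
    have hF1 : (1 + (ξ + η) ^ 2) ^ (-a) = kceF a (ξ + η) := rfl
    have hF2 : (1 + η ^ 2) ^ (-a) = kceF a η := rfl
    by_cases h1 : |η| < c
    · -- |η| < c, so ξ + η > c
      have hlt := abs_lt.mp h1
      have hgt : c < ξ + η := by linarith [hξc]
      have hb : kceF a (ξ + η) ≤ c ^ (-(2*a)) := by
        have h2 : c ^ 2 ≤ 1 + (ξ + η) ^ 2 := by nlinarith
        calc kceF a (ξ + η) ≤ (c ^ 2) ^ (-a) :=
              Real.rpow_le_rpow_of_nonpos (by positivity) h2 (by linarith)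
          _ = c ^ (-(2*a)) := by rw [kce_sq_rpow hc]; ring_nf
      have hmem : (Ioo (-c) c).indicator (kceF a) η = kceF a η :=
        Set.indicator_of_mem (by constructor <;> linarith) _
      have key : kceF a (ξ + η) * kceF a η ≤ c ^ (-(2*a)) * kceF a η :=
        mul_le_mul_of_nonneg_right hb (kceF_nonneg a η)
      rw [hF1, hF2]
      have := hind_nn (Ioo (-c) c) a (ξ + η)
      have := hind_nn (Ici c) (2*a) η
      have := hind_nn (Iic (-c)) (2*a) η
      have := hind_nn (Ici c) (2*a) (ξ + η)
      have := hind_nn (Iic (-c)) (2*a) (ξ + η)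
      rw [hmem] at *
      nlinarith [mul_nonneg hcn (hind_nn (Ioo (-c) c) a (ξ + η))]
    · by_cases h2 : |ξ + η| < c
      · have hlt := abs_lt.mp h2
        have hgt : η < -c := by linarith [hξc]
        have hb : kceF a η ≤ c ^ (-(2*a)) := by
          have h3 : c ^ 2 ≤ 1 + η ^ 2 := by nlinarith
          calc kceF a η ≤ (c ^ 2) ^ (-a) :=
                Real.rpow_le_rpow_of_nonpos (by positivity) h3 (by linarith)
            _ = c ^ (-(2*a)) := by rw [kce_sq_rpow hc]; ring_nf
        have hmem : (Ioo (-c) c).indicator (kceF a) (ξ + η) = kceF a (ξ + η) :=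
          Set.indicator_of_mem (by constructor <;> linarith) _
        have key : kceF a (ξ + η) * kceF a η ≤ c ^ (-(2*a)) * kceF a (ξ + η) := by
          rw [mul_comm]
          exact mul_le_mul_of_nonneg_right hb (kceF_nonneg a (ξ + η))
        rw [hF1, hF2]
        rw [hmem]
        nlinarith [mul_nonneg hcn (hind_nn (Ioo (-c) c) a η),
          hind_nn (Ici c) (2*a) η, hind_nn (Iic (-c)) (2*a) η,
          hind_nn (Ici c) (2*a) (ξ + η), hind_nn (Iic (-c)) (2*a) (ξ + η)]
      · -- both |η| ≥ c and |ξ+η| ≥ c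
        have h1' : c ≤ |η| := not_lt.mp h1
        have h2' : c ≤ |ξ + η| := not_lt.mp h2
        have hsq1 : kceF a η * kceF a η = kceF (2*a) η := kce_mul_self (by positivity) a
        have hsq2 : kceF a (ξ + η) * kceF a (ξ + η) = kceF (2*a) (ξ + η) :=
          kce_mul_self (by positivity) a
        have key : kceF a (ξ + η) * kceF a η ≤ kceF (2*a) η + kceF (2*a) (ξ + η) := by
          nlinarith [sq_nonneg (kceF a η - kceF a (ξ + η)), kceF_nonneg a η,
            kceF_nonneg a (ξ + η)]
        have hG1 : kceF (2*a) η ≤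
            (Ici c).indicator (kceF (2*a)) η + (Iic (-c)).indicator (kceF (2*a)) η := by
          rcases le_abs.mp h1' with h | h
          · rw [Set.indicator_of_mem (by exact h : η ∈ Ici c)]
            linarith [hind_nn (Iic (-c)) (2*a) η]
          · rw [Set.indicator_of_mem (by simpa using (by linarith : η ≤ -c) : η ∈ Iic (-c))]
            linarith [hind_nn (Ici c) (2*a) η]
        have hG2 : kceF (2*a) (ξ + η) ≤
            (Ici c).indicator (kceF (2*a)) (ξ + η) + (Iic (-c)).indicator (kceF (2*a)) (ξ + η) := by
          rcases le_abs.mp h2' with h | h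
          · rw [Set.indicator_of_mem (by exact h : ξ + η ∈ Ici c)]
            linarith [hind_nn (Iic (-c)) (2*a) (ξ + η)]
          · rw [Set.indicator_of_mem (by simpa using (by linarith : ξ + η ≤ -c) : ξ + η ∈ Iic (-c))]
            linarith [hind_nn (Ici c) (2*a) (ξ + η)]
        rw [hF1, hF2]
        have hnn1 := mul_nonneg hcn (hind_nn (Ioo (-c) c) a η)
        have hnn2 := mul_nonneg hcn (hind_nn (Ioo (-c) c) a (ξ + η))
        linarith
  -- compare integrals
  have hstep := integral_mono_of_nonneg
    (Filter.Eventually.of_forall fun η : ℝ =>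
      mul_nonneg (Real.rpow_nonneg (by positivity) _) (Real.rpow_nonneg (by positivity) _))
    hmaj (Filter.Eventually.of_forall hpt)
  -- split the integral of the majorant
  have hT12 : Integrable (fun η : ℝ => c ^ (-(2*a)) * (Ioo (-c) c).indicator (kceF a) η
      + c ^ (-(2*a)) * (Ioo (-c) c).indicator (kceF a) (ξ + η)) := hT1.add hT2
  have hT34 : Integrable (fun η : ℝ => (Ici c).indicator (kceF (2*a)) η
      + (Iic (-c)).indicator (kceF (2*a)) η) := hT3.add hT4
  have hT56 : Integrable (fun η : ℝ => (Ici c).indicator (kceF (2*a)) (ξ + η)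
      + (Iic (-c)).indicator (kceF (2*a)) (ξ + η)) := hT5.add hT6
  have hT3456 : Integrable (fun η : ℝ => ((Ici c).indicator (kceF (2*a)) η
      + (Iic (-c)).indicator (kceF (2*a)) η)
      + ((Ici c).indicator (kceF (2*a)) (ξ + η)
      + (Iic (-c)).indicator (kceF (2*a)) (ξ + η))) := hT34.add hT56
  rw [integral_add hT12 hT3456,
    integral_add hT1 hT2, integral_add hT34 hT56,
    integral_add hT3 hT4, integral_add hT5 hT6] at hstep
  -- bound each piece
  have hshift1 : (∫ η : ℝ, c ^ (-(2*a)) * (Ioo (-c) c).indicator (kceF a) (ξ + η))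
      = ∫ η : ℝ, c ^ (-(2*a)) * (Ioo (-c) c).indicator (kceF a) η := by
    rw [integral_const_mul ((c:ℝ) ^ (-(2*a))), integral_const_mul ((c:ℝ) ^ (-(2*a))),
      integral_add_left_eq_self (fun u : ℝ => (Ioo (-c) c).indicator (kceF a) u) ξ]
  have hshift5 : (∫ η : ℝ, (Ici c).indicator (kceF (2*a)) (ξ + η))
      = ∫ η : ℝ, (Ici c).indicator (kceF (2*a)) η :=
    integral_add_left_eq_self (fun u : ℝ => (Ici c).indicator (kceF (2*a)) u) ξ
  have hshift6 : (∫ η : ℝ, (Iic (-c)).indicator (kceF (2*a)) (ξ + η))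
      = ∫ η : ℝ, (Iic (-c)).indicator (kceF (2*a)) η :=
    integral_add_left_eq_self (fun u : ℝ => (Iic (-c)).indicator (kceF (2*a)) u) ξ
  rw [hshift1, hshift5, hshift6] at hstep
  have hbulkb : (∫ η : ℝ, c ^ (-(2*a)) * (Ioo (-c) c).indicator (kceF a) η)
      ≤ 2 * (c ^ (1 - 4 * a) / (1 - 2 * a)) := by
    rw [integral_const_mul ((c:ℝ) ^ (-(2*a))), integral_indicator measurableSet_Ioo]
    have hb := kce_bulk (by linarith : (0:ℝ) < a) ha2 hc
    have hmm : c ^ (-(2*a)) * (2 * (c ^ (1 - 2*a) / (1 - 2*a)))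
        = 2 * (c ^ (1 - 4 * a) / (1 - 2 * a)) := by
      rw [show (1:ℝ) - 4 * a = -(2*a) + (1 - 2*a) by ring, Real.rpow_add hc]
      ring
    calc c ^ (-(2*a)) * ∫ η in Ioo (-c) c, kceF a η
        ≤ c ^ (-(2*a)) * (2 * (c ^ (1 - 2*a) / (1 - 2*a))) :=
          mul_le_mul_of_nonneg_left hb (Real.rpow_nonneg hc.le _)
      _ = 2 * (c ^ (1 - 4 * a) / (1 - 2 * a)) := hmm
  have htail3 : (∫ η : ℝ, (Ici c).indicator (kceF (2*a)) η)
      ≤ c ^ (1 - 4 * a) / (4 * a - 1) := by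
    rw [integral_indicator measurableSet_Ici]
    have := kce_tail_Ici ha2' hc
    rw [show (1:ℝ) - 2 * (2*a) = 1 - 4 * a by ring, show 2 * (2*a) - 1 = 4 * a - 1 by ring] at this
    exact this
  have htail4 : (∫ η : ℝ, (Iic (-c)).indicator (kceF (2*a)) η)
      ≤ c ^ (1 - 4 * a) / (4 * a - 1) := by
    rw [integral_indicator measurableSet_Iic]
    have := kce_tail_Iic ha2' hc
    rw [show (1:ℝ) - 2 * (2*a) = 1 - 4 * a by ring, show 2 * (2*a) - 1 = 4 * a - 1 by ring] at this
    exact this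
  have hfinal : (ξ / 2) ^ (1 - 4 * a) * (4 / (1 - 2 * a) + 4 / (4 * a - 1))
      = 2 * (2 * (c ^ (1 - 4 * a) / (1 - 2 * a))) + 4 * (c ^ (1 - 4 * a) / (4 * a - 1)) := by
    rw [← hc_def]; ring
  rw [hfinal]
  linarith

theorem kernel_convolution_estimate (s : ℝ) (hs1 : -1/2 < s) (hs2 : s < 0) :
    ∃ C : ℝ, 0 < C ∧ ∀ ξ : ℝ,
      (∫ η : ℝ, (1 + (ξ + η) ^ 2) ^ (-(1/4 - s/2)) * (1 + η ^ 2) ^ (-(1/4 - s/2))) ≤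
        C * (4 + ξ ^ 2) ^ s := by
  obtain ⟨a, ha_def⟩ : ∃ a : ℝ, a = 1/4 - s/2 := ⟨_, rfl⟩
  simp only [← ha_def]
  have ha1 : 1/4 < a := by rw [ha_def]; linarith
  have ha2 : a < 1/2 := by rw [ha_def]; linarith
  have ha2' : (1:ℝ)/2 < 2*a := by linarith
  obtain ⟨J, hJ_def⟩ : ∃ J : ℝ, J = ∫ η : ℝ, (1 + η ^ 2) ^ (-(2*a)) := ⟨_, rfl⟩
  have hJ0 : 0 ≤ J := by
    rw [hJ_def]; exact integral_nonneg fun η => Real.rpow_nonneg (by positivity) _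
  obtain ⟨K, hK_def⟩ : ∃ K : ℝ, K = 4/(1-2*a) + 4/(4*a-1) := ⟨_, rfl⟩
  have hK0 : 0 < K := by
    have h1 : (0:ℝ) < 1-2*a := by linarith
    have h2 : (0:ℝ) < 4*a-1 := by linarith
    rw [hK_def]; positivity
  have h5pos : (0:ℝ) < (5:ℝ)^(-s) := Real.rpow_pos_of_pos (by norm_num) _
  have h20pos : (0:ℝ) < (20:ℝ)^(-s) := Real.rpow_pos_of_pos (by norm_num) _
  refine ⟨(J+1) * (5:ℝ)^(-s) + K * (20:ℝ)^(-s), by positivity, ?_⟩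
  -- uniform bound
  have huni : ∀ ξ : ℝ, (∫ η : ℝ, (1 + (ξ + η)^2)^(-a) * (1 + η^2)^(-a)) ≤ J := by
    intro ξ
    have h1 : Integrable (fun η : ℝ => (1+(ξ+η)^2)^(-(2*a))) :=
      (kce_int2 ha2').comp_add_left ξ
    have hmajint : Integrable (fun η : ℝ => ((1+(ξ+η)^2)^(-(2*a)) + (1+η^2)^(-(2*a)))/2) :=
      (h1.add (kce_int2 ha2')).div_const 2
    have hstep := integral_mono_of_nonneg
      (Filter.Eventually.of_forall fun η : ℝ =>
        (by positivity : (0:ℝ) ≤ (1 + (ξ + η)^2)^(-a) * (1 + η^2)^(-a)))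
      hmajint
      (Filter.Eventually.of_forall (fun η : ℝ => by
        have e1 := kce_mul_self (show (0:ℝ) < 1+(ξ+η)^2 by positivity) a
        have e2 := kce_mul_self (show (0:ℝ) < 1+η^2 by positivity) a
        nlinarith [sq_nonneg ((1+(ξ+η)^2)^(-a) - (1+η^2)^(-a))]))
    have hshift : (∫ η : ℝ, (1+(ξ+η)^2)^(-(2*a))) = ∫ η : ℝ, (1+η^2)^(-(2*a)) :=
      integral_add_left_eq_self (fun u : ℝ => (1+u^2)^(-(2*a))) ξ
    have hcalc : (∫ η : ℝ, ((1+(ξ+η)^2)^(-(2*a)) + (1+η^2)^(-(2*a)))/2) = J := by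
      rw [integral_div, integral_add h1 (kce_int2 ha2'), hshift, ← hJ_def]
      ring
    rw [hcalc] at hstep
    exact hstep
  -- decay bound scaled
  have hbig : ∀ ζ : ℝ, 1 ≤ ζ → (ζ/2)^(1-4*a) * K ≤ K * (20:ℝ)^(-s) * (4 + ζ^2)^s := by
    intro ζ hζ
    have hc : (0:ℝ) < ζ/2 := by linarith
    have e1 : (ζ/2)^(1-4*a) = ((ζ/2)^2)^s := by
      rw [kce_sq_rpow hc s]
      congr 1
      rw [ha_def]; ring
    have e2 : ((ζ/2)^2 : ℝ)^s ≤ ((4+ζ^2)/20)^s := by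
      apply Real.rpow_le_rpow_of_nonpos (by positivity) (by nlinarith) hs2.le
    have e3 : (((4+ζ^2):ℝ)/20)^s = (4+ζ^2)^s * (20:ℝ)^(-s) := by
      rw [Real.div_rpow (by positivity) (by norm_num), Real.rpow_neg (by norm_num)]
      ring
    calc (ζ/2)^(1-4*a) * K ≤ ((4+ζ^2)/20)^s * K := by
          rw [e1]; exact mul_le_mul_of_nonneg_right e2 hK0.le
      _ = K * (20:ℝ)^(-s) * (4 + ζ^2)^s := by rw [e3]; ring
  intro ξ
  have hpos : (0:ℝ) < 4 + ξ^2 := by positivity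
  have hrpos : (0:ℝ) < (4 + ξ^2)^s := Real.rpow_pos_of_pos hpos s
  by_cases hcase : |ξ| ≤ 1
  · have hle : (4+ξ^2) ≤ 5 := by nlinarith [sq_abs ξ, abs_nonneg ξ]
    have h5 : (5:ℝ)^s ≤ (4+ξ^2)^s := Real.rpow_le_rpow_of_nonpos hpos hle hs2.le
    have hid : (5:ℝ)^(-s) * (5:ℝ)^s = 1 := by
      rw [← Real.rpow_add (by norm_num)]; simp
    have hKnn : (0:ℝ) ≤ K * (20:ℝ)^(-s) * (4+ξ^2)^s := by positivity
    calc (∫ η : ℝ, (1 + (ξ + η)^2)^(-a) * (1 + η^2)^(-a)) ≤ J := huni ξ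
      _ ≤ (J+1) * ((5:ℝ)^(-s) * (4+ξ^2)^s) := by
          have h6 : (J+1) * ((5:ℝ)^(-s) * (5:ℝ)^s) ≤ (J+1) * ((5:ℝ)^(-s) * (4+ξ^2)^s) :=
            mul_le_mul_of_nonneg_left
              (mul_le_mul_of_nonneg_left h5 h5pos.le) (by linarith)
          rw [hid] at h6
          linarith
      _ ≤ ((J+1) * (5:ℝ)^(-s) + K * (20:ℝ)^(-s)) * (4+ξ^2)^s := by
          nlinarith [mul_nonneg (mul_nonneg hK0.le h20pos.le) hrpos.le]
  · push_neg at hcase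
    rcases le_or_gt 0 ξ with hsgn | hsgn
    · have hξ1 : 1 ≤ ξ := by
        have := hcase.le
        rwa [abs_of_nonneg hsgn] at this
      have hd := kce_decay ha1 ha2 hξ1
      calc (∫ η : ℝ, (1 + (ξ + η)^2)^(-a) * (1 + η^2)^(-a))
          ≤ (ξ/2)^(1-4*a) * K := by rw [hK_def]; exact hd
        _ ≤ K * (20:ℝ)^(-s) * (4 + ξ^2)^s := hbig ξ hξ1
        _ ≤ ((J+1) * (5:ℝ)^(-s) + K * (20:ℝ)^(-s)) * (4+ξ^2)^s := by
          nlinarith [mul_nonneg (mul_nonneg (by linarith : (0:ℝ) ≤ J+1) h5pos.le) hrpos.le]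
    · have hξ1 : 1 ≤ -ξ := by
        have := hcase.le
        rwa [abs_of_neg hsgn] at this
      have hsym : (∫ η : ℝ, (1 + (ξ + η)^2)^(-a) * (1 + η^2)^(-a))
          = ∫ η : ℝ, (1 + ((-ξ) + η)^2)^(-a) * (1 + η^2)^(-a) := by
        have h := integral_neg_eq_self
          (fun η : ℝ => (1 + ((-ξ) + η)^2)^(-a) * (1 + η^2)^(-a)) volume
        rw [← h]
        congr 1
        funext η
        have e1 : (1 + (-ξ + -η)^2 : ℝ) = 1 + (ξ+η)^2 := by ring
        have e2 : (1 + (-η)^2 : ℝ) = 1 + η^2 := by ring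
        rw [e1, e2]
      have hd := kce_decay ha1 ha2 hξ1
      have hb := hbig (-ξ) hξ1
      have e4 : ((-ξ:ℝ)^2) = ξ^2 := by ring
      rw [e4] at hb
      calc (∫ η : ℝ, (1 + (ξ + η)^2)^(-a) * (1 + η^2)^(-a))
          = ∫ η : ℝ, (1 + ((-ξ) + η)^2)^(-a) * (1 + η^2)^(-a) := hsym
        _ ≤ ((-ξ)/2)^(1-4*a) * K := by rw [hK_def]; exact hd
        _ ≤ K * (20:ℝ)^(-s) * (4 + ξ^2)^s := hb
        _ ≤ ((J+1) * (5:ℝ)^(-s) + K * (20:ℝ)^(-s)) * (4+ξ^2)^s := by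
          nlinarith [mul_nonneg (mul_nonneg (by linarith : (0:ℝ) ≤ J+1) h5pos.le) hrpos.le]
end

section
/- There exist constants c, C > 0 such that for all ξ ∈ ℝ: c · log(4 + ξ²)/√(4 + ξ²) ≤ ∫_ℝ (1 + (ξ + η)²)^{-1/2} (1 + η²)^{-1/2} dη ≤ C · log(4 + ξ²)/√(4 + ξ²). -/
open MeasureTheory
open Real Set
noncomputable def P (ξ : ℝ) : ℝ → ℝ := fun η => (Real.sqrt (1+(ξ+η)^2))⁻¹ * (Real.sqrt (1+η^2))⁻¹

lemma rpow_half_eq (x : ℝ) : (1 + x^2 : ℝ) ^ (-(1/2) : ℝ) = (Real.sqrt (1+x^2))⁻¹ := by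
  rw [Real.rpow_neg (by positivity), ← Real.sqrt_eq_rpow]

lemma P_cont (ξ : ℝ) : Continuous (P ξ) := by
  unfold P
  have h1 : ∀ y : ℝ, Real.sqrt (1 + y^2) ≠ 0 := fun y => by positivity
  fun_prop (disch := intro x; exact h1 _)

lemma P_nonneg (ξ η : ℝ) : 0 ≤ P ξ η := by unfold P; positivity

lemma sqrt_one_add_sq_pos (x : ℝ) : 0 < Real.sqrt (1 + x^2) := by positivity

lemma P_integrable (ξ : ℝ) : Integrable (P ξ) := by
  apply Integrable.mono' (g := fun η => (Real.sqrt 2 * Real.sqrt (1+ξ^2)) * (1+η^2)⁻¹)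
    ((integrable_inv_one_add_sq).const_mul _) (P_cont ξ).aestronglyMeasurable
  filter_upwards with η
  rw [Real.norm_of_nonneg (P_nonneg ξ η)]
  unfold P
  have hA := sqrt_one_add_sq_pos (ξ+η)
  have hB := sqrt_one_add_sq_pos η
  have key : Real.sqrt (1+η^2) ≤ Real.sqrt 2 * Real.sqrt (1+ξ^2) * Real.sqrt (1+(ξ+η)^2) := by
    rw [← Real.sqrt_mul (by norm_num), ← Real.sqrt_mul (by positivity)]
    apply Real.sqrt_le_sqrt
    nlinarith [sq_nonneg (2*ξ+η), sq_nonneg (ξ*(ξ+η)), sq_nonneg ξ, sq_nonneg (ξ+η)]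
  have h2 : (Real.sqrt (1+(ξ+η)^2))⁻¹ ≤ (Real.sqrt 2 * Real.sqrt (1+ξ^2)) * (Real.sqrt (1+η^2))⁻¹ := by
    rw [← div_eq_mul_inv, ← one_div, div_le_div_iff₀ hA hB]
    linarith [key]
  calc (Real.sqrt (1+(ξ+η)^2))⁻¹ * (Real.sqrt (1+η^2))⁻¹
      ≤ ((Real.sqrt 2 * Real.sqrt (1+ξ^2)) * (Real.sqrt (1+η^2))⁻¹) * (Real.sqrt (1+η^2))⁻¹ := by
        apply mul_le_mul_of_nonneg_right h2 (by positivity)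
    _ = (Real.sqrt 2 * Real.sqrt (1+ξ^2)) * (1+η^2)⁻¹ := by
        rw [mul_assoc, ← mul_inv, Real.mul_self_sqrt (by positivity)]




lemma lower_bound (ξ : ℝ) (hξ : 0 ≤ ξ) :
    (1/6) * (Real.log (4+ξ^2) / Real.sqrt (4+ξ^2)) ≤ ∫ η, P ξ η := by
  have hK : 0 < Real.sqrt (4+ξ^2) := by positivity
  have step1 : (∫ η in Ioc 0 (ξ+2), P ξ η) ≤ ∫ η, P ξ η :=
    setIntegral_le_integral (P_integrable ξ) (Filter.Eventually.of_forall (P_nonneg ξ))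
  have hle : (0:ℝ) ≤ ξ + 2 := by linarith
  have hcont : ContinuousOn (fun η : ℝ => (3*Real.sqrt (4+ξ^2))⁻¹ * (1+η)⁻¹) (uIcc 0 (ξ+2)) := by
    apply ContinuousOn.mul continuousOn_const
    apply ContinuousOn.inv₀ (by fun_prop)
    intro x hx
    rw [uIcc_of_le hle] at hx
    have := hx.1; positivity
  have step2 : (∫ η in Ioc 0 (ξ+2), (3*Real.sqrt (4+ξ^2))⁻¹ * (1+η)⁻¹) ≤ ∫ η in Ioc 0 (ξ+2), P ξ η := by
    apply setIntegral_mono_on ((hcont.intervalIntegrable).1) ((P_integrable ξ).integrableOn)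
      measurableSet_Ioc
    intro η hη
    obtain ⟨hη0, hη2⟩ := hη
    unfold P
    have h1 : Real.sqrt (1+(ξ+η)^2) ≤ 3*Real.sqrt (4+ξ^2) := by
      rw [show 3*Real.sqrt (4+ξ^2) = Real.sqrt (9*(4+ξ^2)) by
        rw [show (9:ℝ)*(4+ξ^2) = 3^2*(4+ξ^2) by norm_num, Real.sqrt_mul (by positivity),
          Real.sqrt_sq (by norm_num)]]
      apply Real.sqrt_le_sqrt
      nlinarith [mul_nonneg (by linarith : (0:ℝ) ≤ 2*ξ+2-(ξ+η)) (by linarith : (0:ℝ) ≤ 2*ξ+2+(ξ+η)),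
        sq_nonneg ξ]
    have h2 : Real.sqrt (1+η^2) ≤ 1+η := by
      rw [show (1:ℝ)+η = Real.sqrt ((1+η)^2) from (Real.sqrt_sq (by linarith)).symm]
      apply Real.sqrt_le_sqrt
      nlinarith
    gcongr
  have step3 : (∫ η in Ioc 0 (ξ+2), (3*Real.sqrt (4+ξ^2))⁻¹ * (1+η)⁻¹)
      = (3*Real.sqrt (4+ξ^2))⁻¹ * Real.log (ξ+3) := by
    rw [← intervalIntegral.integral_of_le hle, intervalIntegral.integral_const_mul]
    congr 1
    rw [show (fun η : ℝ => (1+η)⁻¹) = fun η : ℝ => (fun x : ℝ => x⁻¹) (1+η) from rfl,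
      intervalIntegral.integral_comp_add_left (fun x : ℝ => x⁻¹) 1, integral_inv
        (by rw [Set.mem_uIcc]; push_neg; constructor <;> intro h <;> nlinarith)]
    norm_num
    ring_nf
  have hlog : Real.log (4+ξ^2) ≤ 2 * Real.log (ξ+3) := by
    rw [show (2:ℝ) * Real.log (ξ+3) = Real.log ((ξ+3)^2) by rw [Real.log_pow]; norm_num]
    exact Real.log_le_log (by positivity) (by nlinarith)
  have step4 : (1/6) * (Real.log (4+ξ^2) / Real.sqrt (4+ξ^2))
      ≤ (3*Real.sqrt (4+ξ^2))⁻¹ * Real.log (ξ+3) := by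
    have heq : (3*Real.sqrt (4+ξ^2))⁻¹ * Real.log (ξ+3)
        = (1/6) * ((2 * Real.log (ξ+3)) / Real.sqrt (4+ξ^2)) := by
      field_simp; ring
    rw [heq]
    gcongr
  linarith




lemma hsqrt_cont : Continuous (fun x : ℝ => (Real.sqrt (1+x^2))⁻¹) := by
  have h1 : ∀ y : ℝ, Real.sqrt (1 + y^2) ≠ 0 := fun y => by positivity
  fun_prop (disch := intro x; exact h1 _)

lemma half_inv_bound {ξ X : ℝ} (hX : (4+ξ^2)/4 ≤ X) :
    (Real.sqrt X)⁻¹ ≤ 2 / Real.sqrt (4+ξ^2) := by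
  have hK : 0 < Real.sqrt (4+ξ^2) := by positivity
  have h1 : Real.sqrt (4+ξ^2) / 2 ≤ Real.sqrt X := by
    rw [Real.le_sqrt (by positivity) (le_trans (by positivity) hX)]
    rw [div_pow, Real.sq_sqrt (by positivity)]
    norm_num
    exact hX
  calc (Real.sqrt X)⁻¹ ≤ (Real.sqrt (4+ξ^2)/2)⁻¹ :=
        inv_anti₀ (by positivity) h1
    _ = 2 / Real.sqrt (4+ξ^2) := by rw [inv_div]

lemma pointwise_bound (ξ : ℝ) (hξ : 0 ≤ ξ) (η : ℝ) :
    P ξ η ≤ (2 / Real.sqrt (4+ξ^2)) * ((Real.sqrt (1+(ξ+η)^2))⁻¹ + (Real.sqrt (1+η^2))⁻¹) := by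
  have hA : (0:ℝ) < (Real.sqrt (1+(ξ+η)^2))⁻¹ := by positivity
  have hB : (0:ℝ) < (Real.sqrt (1+η^2))⁻¹ := by positivity
  unfold P
  rcases le_or_gt ((4+ξ^2)/4) (1+η^2) with hc | hc
  · have h2 := half_inv_bound (ξ := ξ) hc
    nlinarith
  · have hc' : (4+ξ^2)/4 ≤ 1+(ξ+η)^2 := by nlinarith [sq_nonneg (ξ+2*η)]
    have h2 := half_inv_bound (ξ := ξ) hc'
    nlinarith

lemma arsinh_log_bound (ξ s : ℝ) (hs : 0 ≤ s) (hs' : s ≤ 3*ξ+2) (hξ : 0 ≤ ξ) :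
    Real.arsinh s ≤ 2 * Real.log (4+ξ^2) := by
  have h0 : Real.arsinh s ≤ Real.arsinh (3*ξ+2) := Real.arsinh_le_arsinh.2 hs'
  have h1 : Real.sqrt (1+(3*ξ+2)^2) ≤ 1+(3*ξ+2) := by
    rw [show (1:ℝ)+(3*ξ+2) = Real.sqrt ((1+(3*ξ+2))^2) from (Real.sqrt_sq (by linarith)).symm]
    apply Real.sqrt_le_sqrt; nlinarith
  have h2 : Real.arsinh (3*ξ+2) = Real.log (3*ξ+2 + Real.sqrt (1+(3*ξ+2)^2)) := by
    simp only [Real.arsinh]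
  have h3 : Real.log (3*ξ+2 + Real.sqrt (1+(3*ξ+2)^2)) ≤ Real.log ((4+ξ^2)^2) := by
    apply Real.log_le_log (by positivity)
    nlinarith [h1, sq_nonneg ξ, sq_nonneg (ξ-1), sq_nonneg (ξ^2)]
  rw [Real.log_pow] at h3
  push_cast at h3
  linarith

lemma upper_bound (ξ : ℝ) (hξ : 0 ≤ ξ) :
    (∫ η, P ξ η) ≤ 20 * (Real.log (4+ξ^2) / Real.sqrt (4+ξ^2)) := by
  set T : ℝ := 2*ξ+2 with hT
  have hT0 : (0:ℝ) < T := by simp only [hT]; linarith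
  have hTT : -T ≤ T := by linarith
  have hK : (0:ℝ) < Real.sqrt (4+ξ^2) := by positivity
  have hL1 : (1:ℝ) ≤ Real.log (4+ξ^2) := by
    have he : Real.exp 1 ≤ 4 + ξ^2 := by nlinarith [Real.exp_one_lt_d9]
    calc (1:ℝ) = Real.log (Real.exp 1) := (Real.log_exp 1).symm
      _ ≤ Real.log (4+ξ^2) := Real.log_le_log (Real.exp_pos 1) he
  -- assemble
  have htails : 2/T + 2/T ≤ 4 * (Real.log (4+ξ^2) / Real.sqrt (4+ξ^2)) := by
    have hKle : Real.sqrt (4+ξ^2) ≤ T := by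
      have h' : Real.sqrt (4+ξ^2) ≤ Real.sqrt ((2*ξ+2)^2) := Real.sqrt_le_sqrt (by nlinarith)
      rwa [Real.sqrt_sq (by linarith)] at h'
    have h1 : 2/T ≤ 2/Real.sqrt (4+ξ^2) := by
      rw [div_le_div_iff₀ hT0 hK]; nlinarith [hKle]
    have h2 : (2:ℝ)/Real.sqrt (4+ξ^2) ≤ 2 * (Real.log (4+ξ^2) / Real.sqrt (4+ξ^2)) := by
      rw [← mul_div_assoc]
      gcongr
      linarith
    linarith
  -- splitting
  have hsplit1 : (∫ η, P ξ η)
      = (∫ η in Iic (-T), P ξ η) + ∫ η in Ioi (-T), P ξ η := by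
    rw [← integral_add_compl measurableSet_Iic (P_integrable ξ), compl_Iic]
  have hsplit2 : (∫ η in Ioi (-T), P ξ η)
      = (∫ η in Ioc (-T) T, P ξ η) + ∫ η in Ioi T, P ξ η := by
    rw [← Set.Ioc_union_Ioi_eq_Ioi hTT,
      setIntegral_union (Set.Ioc_disjoint_Ioi le_rfl) measurableSet_Ioi
        (P_integrable ξ).integrableOn (P_integrable ξ).integrableOn]
  -- middle term
  have hDcont : Continuous (fun η : ℝ => (2 / Real.sqrt (4+ξ^2)) *
      ((Real.sqrt (1+(ξ+η)^2))⁻¹ + (Real.sqrt (1+η^2))⁻¹)) := by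
    apply Continuous.mul continuous_const
    exact (hsqrt_cont.comp (by fun_prop)).add hsqrt_cont
  have hmid1 : (∫ η in Ioc (-T) T, P ξ η) ≤ ∫ η in Ioc (-T) T, (2 / Real.sqrt (4+ξ^2)) *
      ((Real.sqrt (1+(ξ+η)^2))⁻¹ + (Real.sqrt (1+η^2))⁻¹) := by
    apply setIntegral_mono_on (P_integrable ξ).integrableOn
      ((hDcont.intervalIntegrable (-T) T).1) measurableSet_Ioc
    exact fun η _ => pointwise_bound ξ hξ η
  have int1 : IntervalIntegrable (fun η : ℝ => (Real.sqrt (1+(ξ+η)^2))⁻¹) volume (-T) T :=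
    ((hsqrt_cont.comp (by fun_prop : Continuous fun η : ℝ => ξ + η)).intervalIntegrable _ _)
  have int2 : IntervalIntegrable (fun η : ℝ => (Real.sqrt (1+η^2))⁻¹) volume (-T) T :=
    hsqrt_cont.intervalIntegrable _ _
  have harsinh : ∀ a b : ℝ, ∫ η in a..b, (Real.sqrt (1+η^2))⁻¹
      = Real.arsinh b - Real.arsinh a := fun a b =>
    intervalIntegral.integral_eq_sub_of_hasDerivAt (fun x _ => Real.hasDerivAt_arsinh x)
      (hsqrt_cont.intervalIntegrable _ _)
  have hmid2 : (∫ η in Ioc (-T) T, (2 / Real.sqrt (4+ξ^2)) *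
      ((Real.sqrt (1+(ξ+η)^2))⁻¹ + (Real.sqrt (1+η^2))⁻¹))
      = (2 / Real.sqrt (4+ξ^2)) * ((Real.arsinh (ξ+T) - Real.arsinh (ξ+-T))
          + (Real.arsinh T - Real.arsinh (-T))) := by
    rw [← intervalIntegral.integral_of_le hTT, intervalIntegral.integral_const_mul,
      intervalIntegral.integral_add int1 int2]
    congr 1
    rw [intervalIntegral.integral_comp_add_left (fun x : ℝ => (Real.sqrt (1+x^2))⁻¹) ξ,
      harsinh, harsinh]
  have hmid3 : (Real.arsinh (ξ+T) - Real.arsinh (ξ+-T)) + (Real.arsinh T - Real.arsinh (-T))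
      ≤ 8 * Real.log (4+ξ^2) := by
    have e1 : Real.arsinh (ξ+T) ≤ 2 * Real.log (4+ξ^2) :=
      arsinh_log_bound ξ _ (by simp only [hT]; linarith) (by simp only [hT]; linarith) hξ
    have e2 : -Real.arsinh (ξ+-T) ≤ 2 * Real.log (4+ξ^2) := by
      rw [← Real.arsinh_neg]
      exact arsinh_log_bound ξ _ (by simp only [hT]; linarith) (by simp only [hT]; linarith) hξ
    have e3 : Real.arsinh T ≤ 2 * Real.log (4+ξ^2) :=
      arsinh_log_bound ξ _ (by simp only [hT]; linarith) (by simp only [hT]; linarith) hξ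
    have e4 : -Real.arsinh (-T) ≤ 2 * Real.log (4+ξ^2) := by
      rw [← Real.arsinh_neg, neg_neg]
      exact e3
    linarith
  have hmid : (∫ η in Ioc (-T) T, P ξ η)
      ≤ 16 * (Real.log (4+ξ^2) / Real.sqrt (4+ξ^2)) := by
    rw [hmid2] at hmid1
    calc (∫ η in Ioc (-T) T, P ξ η)
        ≤ (2 / Real.sqrt (4+ξ^2)) * ((Real.arsinh (ξ+T) - Real.arsinh (ξ+-T))
          + (Real.arsinh T - Real.arsinh (-T))) := hmid1
      _ ≤ (2 / Real.sqrt (4+ξ^2)) * (8 * Real.log (4+ξ^2)) := by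
          apply mul_le_mul_of_nonneg_left hmid3 (by positivity)
      _ = 16 * (Real.log (4+ξ^2) / Real.sqrt (4+ξ^2)) := by ring
  -- right tail
  have hrpow : ∀ x : ℝ, 0 < x → x ^ (-2:ℝ) = (x^2)⁻¹ := fun x hx => by
    rw [Real.rpow_neg hx.le, show ((2:ℝ)) = ((2:ℕ):ℝ) by norm_num, Real.rpow_natCast]
  have htail_int : ∫ x in Ioi T, (2 * x ^ (-2:ℝ)) = 2/T := by
    rw [integral_const_mul, integral_Ioi_rpow_of_lt (by norm_num) hT0]
    norm_num [Real.rpow_neg_one]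
    ring
  have htail_intble : IntegrableOn (fun x : ℝ => 2 * x ^ (-2:ℝ)) (Ioi T) :=
    (integrableOn_Ioi_rpow_of_lt (by norm_num) hT0).const_mul 2
  have hright : (∫ η in Ioi T, P ξ η) ≤ 2/T := by
    rw [← htail_int]
    apply setIntegral_mono_on (P_integrable ξ).integrableOn htail_intble measurableSet_Ioi
    intro η hη
    rw [Set.mem_Ioi] at hη
    have hη0 : 0 < η := lt_trans hT0 hη
    have b1 : (Real.sqrt (1+(ξ+η)^2))⁻¹ ≤ η⁻¹ :=
      inv_anti₀ hη0 ((Real.le_sqrt hη0.le (by positivity)).2 (by nlinarith))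
    have b2 : (Real.sqrt (1+η^2))⁻¹ ≤ η⁻¹ :=
      inv_anti₀ hη0 ((Real.le_sqrt hη0.le (by positivity)).2 (by nlinarith))
    calc P ξ η ≤ η⁻¹ * η⁻¹ := by
          unfold P
          apply mul_le_mul b1 b2 (by positivity) (by positivity)
      _ = (η^2)⁻¹ := by rw [← mul_inv]; ring_nf
      _ ≤ 2 * η ^ (-2:ℝ) := by rw [hrpow η hη0]; nlinarith [inv_pos.2 (pow_pos hη0 2)]
  -- left tail
  have hleft : (∫ η in Iic (-T), P ξ η) ≤ 2/T := by
    rw [← integral_comp_neg_Ioi T (P ξ), ← htail_int]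
    have hPneg : (fun x : ℝ => P ξ (-x)) = P (-ξ) := by
      funext x; unfold P; ring_nf
    rw [show (∫ x in Ioi T, P ξ (-x)) = ∫ x in Ioi T, P (-ξ) x by rw [hPneg]]
    apply setIntegral_mono_on (P_integrable (-ξ)).integrableOn htail_intble measurableSet_Ioi
    intro x hx
    rw [Set.mem_Ioi] at hx
    have hx0 : 0 < x := lt_trans hT0 hx
    have hx2 : 0 < x/2 := by linarith
    have hxξ : x/2 ≤ x - ξ := by simp only [hT] at hx; linarith
    have b1 : (Real.sqrt (1+(-ξ+x)^2))⁻¹ ≤ (x/2)⁻¹ :=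
      inv_anti₀ hx2 ((Real.le_sqrt hx2.le (by positivity)).2
        (by nlinarith [mul_le_mul hxξ hxξ hx2.le (by linarith : (0:ℝ) ≤ x - ξ)]))
    have b2 : (Real.sqrt (1+x^2))⁻¹ ≤ x⁻¹ :=
      inv_anti₀ hx0 ((Real.le_sqrt hx0.le (by positivity)).2 (by linarith))
    calc P (-ξ) x ≤ (x/2)⁻¹ * x⁻¹ := by
          unfold P
          apply mul_le_mul b1 b2 (by positivity) (by positivity)
      _ = 2 * x ^ (-2:ℝ) := by rw [hrpow x hx0]; field_simp
  rw [hsplit1, hsplit2]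
  linarith

theorem logarithmic_kernel_estimate :
    ∃ c C : ℝ, 0 < c ∧ 0 < C ∧ ∀ ξ : ℝ,
      c * (Real.log (4 + ξ ^ 2) / Real.sqrt (4 + ξ ^ 2)) ≤
        (∫ η : ℝ, (1 + (ξ + η) ^ 2) ^ (-(1/2) : ℝ) * (1 + η ^ 2) ^ (-(1/2) : ℝ)) ∧
      (∫ η : ℝ, (1 + (ξ + η) ^ 2) ^ (-(1/2) : ℝ) * (1 + η ^ 2) ^ (-(1/2) : ℝ)) ≤
        C * (Real.log (4 + ξ ^ 2) / Real.sqrt (4 + ξ ^ 2)) := by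
  refine ⟨1/6, 20, by norm_num, by norm_num, fun ξ => ?_⟩
  have heq : (∫ η : ℝ, (1 + (ξ + η) ^ 2) ^ (-(1/2) : ℝ) * (1 + η ^ 2) ^ (-(1/2) : ℝ))
      = ∫ η, P ξ η := by
    congr 1
    funext η
    rw [rpow_half_eq, rpow_half_eq]
    rfl
  rw [heq]
  rcases le_or_gt 0 ξ with hξ | hξ
  · exact ⟨lower_bound ξ hξ, upper_bound ξ hξ⟩
  · have hflip : (∫ η, P ξ η) = ∫ η, P (-ξ) η := by
      rw [← integral_neg_eq_self (P (-ξ))]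
      congr 1
      funext x
      simp only [P]
      ring_nf
    have h1 := lower_bound (-ξ) (by linarith)
    have h2 := upper_bound (-ξ) (by linarith)
    rw [show ((4:ℝ)+(-ξ)^2) = 4+ξ^2 by ring] at h1 h2
    rw [hflip]
    exact ⟨h1, h2⟩
end

section
/- Let ψ: ℝ → ℂ be a Schwartz function with ∫_ℝ ψ(x) dx = 0, and for λ ≥ 2 set ψ_λ(x) := λ ψ(λ x). Then there is a constant C = C(ψ) such that ‖ψ_λ‖²_{H^{-1/2}(ℝ)} ≤ C for all λ ≥ 2, where ‖f‖²_{H^{-1/2}} := ∫_ℝ (1+ξ²)^{-1/2} |f̂(ξ)|² dξ. -/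
open MeasureTheory
open scoped FourierTransform SchwartzMap Real

/-!
With `g = 𝓕 ψ`, the transform of `ψ_λ` is `ξ ↦ g (ξ / λ)`. Since `g` is Schwartz and `g 0 = 0`
(the mean of `ψ`), the mean value theorem and the decay of `g` give
`‖g η‖ (1 + η²) ≤ C |η|`, hence `‖g η‖² (1 + η²) ≤ C² |η|`. Together with
`|ξ| (1 + ξ²)^{-1/2} ≤ 1` this bounds the integrand by `C² λ⁻¹ (1 + (ξ/λ)²)⁻¹`, whose integral is
`C² π` for every `λ > 0`.
-/

theorem Real.fourier_zero_eq_integral {E : Type*} [NormedAddCommGroup E] [NormedSpace ℂ E]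
    (f : ℝ → E) : 𝓕 f 0 = ∫ x, f x := by
  simp [fourier_real_eq]

theorem Real.fourier_comp_mul_left {E : Type*} [NormedAddCommGroup E] [NormedSpace ℂ E]
    (f : ℝ → E) {a : ℝ} (ha : a ≠ 0) (ξ : ℝ) :
    𝓕 (fun x => |a| • f (a * x)) ξ = 𝓕 f (ξ / a) := by
  have hphase : ∀ x, a * x * (ξ / a) = x * ξ := fun x => by field_simp
  simp only [fourier_real_eq, smul_comm _ |a|, ← hphase]
  rw [integral_smul, Measure.integral_comp_mul_left (fun y => 𝐞 (-(y * (ξ / a))) • f y),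
    smul_smul, abs_inv, mul_inv_cancel₀ (abs_ne_zero.mpr ha), one_smul]

namespace SchwartzMap

variable {E F : Type*} [NormedAddCommGroup E] [NormedSpace ℝ E]
  [NormedAddCommGroup F] [NormedSpace ℝ F]

theorem norm_le_seminorm_mul_norm_of_eq_zero (f : 𝓢(E, F)) (hf : f 0 = 0) (x : E) :
    ‖f x‖ ≤ SchwartzMap.seminorm ℝ 0 1 f * ‖x‖ := by
  have hderiv : ∀ y ∈ Set.univ, ‖fderiv ℝ f y‖ ≤ SchwartzMap.seminorm ℝ 0 1 f := fun y _ => by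
    rw [← norm_iteratedFDeriv_one]
    exact norm_iteratedFDeriv_le_seminorm ℝ f 1 y
  simpa [hf] using convex_univ.norm_image_sub_le_of_norm_fderiv_le
    (fun y _ => f.differentiableAt) hderiv (Set.mem_univ 0) (Set.mem_univ x)

theorem norm_mul_one_add_sq_le_of_eq_zero (f : 𝓢(E, F)) (hf : f 0 = 0) (x : E) :
    ‖f x‖ * (1 + ‖x‖ ^ 2) ≤
      (SchwartzMap.seminorm ℝ 0 1 f + SchwartzMap.seminorm ℝ 1 0 f) * ‖x‖ := by
  have hlin := f.norm_le_seminorm_mul_norm_of_eq_zero hf x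
  have hdecay := norm_pow_mul_le_seminorm ℝ f 1 x
  rw [pow_one] at hdecay
  nlinarith [norm_nonneg x]

end SchwartzMap

theorem abs_mul_one_add_sq_rpow_neg_half_le_one (ξ : ℝ) :
    |ξ| * (1 + ξ ^ 2) ^ (-(1 / 2) : ℝ) ≤ 1 := by
  have hpos : 0 < √(1 + ξ ^ 2) := by positivity
  rw [Real.rpow_neg (by positivity), ← Real.sqrt_eq_rpow, ← div_eq_mul_inv, div_le_one hpos,
    ← Real.sqrt_sq_eq_abs]
  exact Real.sqrt_le_sqrt (by linarith)

theorem sq_mul_one_add_sq_le {a C η : ℝ} (ha : 0 ≤ a) (h : a * (1 + η ^ 2) ≤ C * |η|) :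
    a ^ 2 * (1 + η ^ 2) ≤ C ^ 2 * |η| := by
  have hη : |η| ≤ 1 + η ^ 2 := by nlinarith [sq_abs η, abs_nonneg η]
  have hsq : (a * (1 + η ^ 2)) ^ 2 ≤ (C * |η|) ^ 2 := pow_le_pow_left₀ (by positivity) h 2
  have hpos : 0 < 1 + η ^ 2 := by positivity
  refine le_of_mul_le_mul_right ?_ hpos
  calc a ^ 2 * (1 + η ^ 2) * (1 + η ^ 2) = (a * (1 + η ^ 2)) ^ 2 := by ring
    _ ≤ (C * |η|) ^ 2 := hsq
    _ = C ^ 2 * |η| * |η| := by ring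
    _ ≤ C ^ 2 * |η| * (1 + η ^ 2) := by gcongr

theorem one_add_sq_rpow_neg_half_mul_sq_le {a C lam ξ : ℝ} (hlam : 0 < lam) (ha : 0 ≤ a)
    (h : a * (1 + (ξ / lam) ^ 2) ≤ C * |ξ / lam|) :
    (1 + ξ ^ 2) ^ (-(1 / 2) : ℝ) * a ^ 2 ≤ C ^ 2 * (lam⁻¹ * (1 + (ξ / lam) ^ 2)⁻¹) := by
  have hsq := sq_mul_one_add_sq_le ha h
  have hw := abs_mul_one_add_sq_rpow_neg_half_le_one ξ
  have hpos : 0 < 1 + (ξ / lam) ^ 2 := by positivity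
  rw [abs_div, abs_of_pos hlam] at hsq
  calc (1 + ξ ^ 2) ^ (-(1 / 2) : ℝ) * a ^ 2
      = (1 + ξ ^ 2) ^ (-(1 / 2) : ℝ) * (a ^ 2 * (1 + (ξ / lam) ^ 2)) * (1 + (ξ / lam) ^ 2)⁻¹ := by
        field_simp
    _ ≤ (1 + ξ ^ 2) ^ (-(1 / 2) : ℝ) * (C ^ 2 * (|ξ| / lam)) * (1 + (ξ / lam) ^ 2)⁻¹ := by
        gcongr
    _ = C ^ 2 * (|ξ| * (1 + ξ ^ 2) ^ (-(1 / 2) : ℝ)) * (lam⁻¹ * (1 + (ξ / lam) ^ 2)⁻¹) := by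
        ring
    _ ≤ C ^ 2 * 1 * (lam⁻¹ * (1 + (ξ / lam) ^ 2)⁻¹) := by gcongr
    _ = C ^ 2 * (lam⁻¹ * (1 + (ξ / lam) ^ 2)⁻¹) := by rw [mul_one]

theorem integral_inv_mul_inv_one_add_sq_div {lam : ℝ} (hlam : 0 < lam) :
    ∫ ξ : ℝ, lam⁻¹ * (1 + (ξ / lam) ^ 2)⁻¹ = π := by
  rw [integral_const_mul, Measure.integral_comp_div (fun y : ℝ => (1 + y ^ 2)⁻¹),
    integral_univ_inv_one_add_sq, abs_of_pos hlam, smul_eq_mul, inv_mul_cancel_left₀ hlam.ne']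

theorem mean_zero_scaling_bound (ψ : SchwartzMap ℝ ℂ) (h : (∫ x : ℝ, ψ x) = 0) :
    ∃ C : ℝ, ∀ lam : ℝ, 2 ≤ lam →
      (∫ ξ : ℝ, (1 + ξ ^ 2) ^ (-(1/2) : ℝ) *
        ‖𝓕 (fun x => (lam : ℂ) * ψ (lam * x)) ξ‖ ^ 2) ≤ C := by
  set g : 𝓢(ℝ, ℂ) := 𝓕 ψ
  have hg0 : g 0 = 0 := (Real.fourier_zero_eq_integral ψ).trans h
  set C := SchwartzMap.seminorm ℝ 0 1 g + SchwartzMap.seminorm ℝ 1 0 g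
  refine ⟨C ^ 2 * π, fun lam hlam => ?_⟩
  have hlam0 : 0 < lam := by linarith
  have hscale : ∀ ξ, 𝓕 (fun x => (lam : ℂ) * ψ (lam * x)) ξ = g (ξ / lam) := fun ξ => by
    show _ = 𝓕 (⇑ψ) (ξ / lam)
    simpa [abs_of_pos hlam0, Complex.real_smul] using Real.fourier_comp_mul_left ψ hlam0.ne' ξ
  have hdom : Integrable fun ξ : ℝ => C ^ 2 * (lam⁻¹ * (1 + (ξ / lam) ^ 2)⁻¹) :=
    ((integrable_inv_one_add_sq.comp_div hlam0.ne').const_mul _).const_mul _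
  calc _ ≤ ∫ ξ : ℝ, C ^ 2 * (lam⁻¹ * (1 + (ξ / lam) ^ 2)⁻¹) := by
        refine integral_mono_of_nonneg (ae_of_all _ fun ξ => by positivity) hdom
          (ae_of_all _ fun ξ => ?_)
        dsimp only
        rw [hscale]
        refine one_add_sq_rpow_neg_half_mul_sq_le hlam0 (norm_nonneg _) ?_
        simpa only [Real.norm_eq_abs, sq_abs] using
          g.norm_mul_one_add_sq_le_of_eq_zero hg0 (ξ / lam)
    _ = C ^ 2 * π := by rw [integral_const_mul, integral_inv_mul_inv_one_add_sq_div hlam0]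
end

section
/- Fix distinct real numbers κ and ϰ and functions q, r: ℝ → ℂ. Suppose γ_κ, g_κ, h_κ and γ_ϰ, g_ϰ, h_ϰ are differentiable functions on ℝ satisfying, for λ ∈ {κ, ϰ}: γ_λ' = 2(q h_λ + r g_λ), g_λ' = 2λ g_λ + q(γ_λ + 1), h_λ' = -2λ h_λ + r(γ_λ + 1). Then 2(κ - ϰ)[g_κ h_ϰ - h_κ g_ϰ] = d/dx { g_κ h_ϰ + h_κ g_ϰ - (γ_κ + 1)(γ_ϰ + 1)/2 }. -/
theorem green_function_commutation_identity_general (κ ϰ : ℝ) (q r : ℝ → ℂ)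
    (γκ gκ hκ γϰ gϰ hϰ : ℝ → ℂ)
    (hγκ : ∀ x : ℝ, HasDerivAt γκ (2 * (q x * hκ x + r x * gκ x)) x)
    (hgκ : ∀ x : ℝ, HasDerivAt gκ (2 * (κ : ℂ) * gκ x + q x * (γκ x + 1)) x)
    (hhκ : ∀ x : ℝ, HasDerivAt hκ (-(2 * (κ : ℂ)) * hκ x + r x * (γκ x + 1)) x)
    (hγϰ : ∀ x : ℝ, HasDerivAt γϰ (2 * (q x * hϰ x + r x * gϰ x)) x)
    (hgϰ : ∀ x : ℝ, HasDerivAt gϰ (2 * (ϰ : ℂ) * gϰ x + q x * (γϰ x + 1)) x)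
    (hhϰ : ∀ x : ℝ, HasDerivAt hϰ (-(2 * (ϰ : ℂ)) * hϰ x + r x * (γϰ x + 1)) x) :
    ∀ x : ℝ, HasDerivAt
      (fun y => gκ y * hϰ y + hκ y * gϰ y - (γκ y + 1) * (γϰ y + 1) / 2)
      (2 * ((κ : ℂ) - (ϰ : ℂ)) * (gκ x * hϰ x - hκ x * gϰ x)) x := by
  intro x
  have product_rule := (((hgκ x).mul (hhϰ x)).add ((hhκ x).mul (hgϰ x))).sub
    ((((hγκ x).add_const 1).mul ((hγϰ x).add_const 1)).div_const 2)
  -- the q- and r-terms cancel in pairs, leaving only the spectral terms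
  exact product_rule.congr_deriv (by ring)

theorem green_function_commutation_identity (κ ϰ : ℝ) (hne : κ ≠ ϰ) (q r : ℝ → ℂ)
    (γκ gκ hκ γϰ gϰ hϰ : ℝ → ℂ)
    (hγκ : ∀ x : ℝ, HasDerivAt γκ (2 * (q x * hκ x + r x * gκ x)) x)
    (hgκ : ∀ x : ℝ, HasDerivAt gκ (2 * (κ : ℂ) * gκ x + q x * (γκ x + 1)) x)
    (hhκ : ∀ x : ℝ, HasDerivAt hκ (-(2 * (κ : ℂ)) * hκ x + r x * (γκ x + 1)) x)
    (hγϰ : ∀ x : ℝ, HasDerivAt γϰ (2 * (q x * hϰ x + r x * gϰ x)) x)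
    (hgϰ : ∀ x : ℝ, HasDerivAt gϰ (2 * (ϰ : ℂ) * gϰ x + q x * (γϰ x + 1)) x)
    (hhϰ : ∀ x : ℝ, HasDerivAt hϰ (-(2 * (ϰ : ℂ)) * hϰ x + r x * (γϰ x + 1)) x) :
    ∀ x : ℝ, HasDerivAt
      (fun y => gκ y * hϰ y + hκ y * gϰ y - (γκ y + 1) * (γϰ y + 1) / 2)
      (2 * ((κ : ℂ) - (ϰ : ℂ)) * (gκ x * hϰ x - hκ x * gϰ x)) x :=
  green_function_commutation_identity_general κ ϰ q r γκ gκ hκ γϰ gϰ hϰ hγκ hgκ hhκ hγϰ hgϰ hhϰ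
end

section
/- Fix κ ∈ ℝ and functions q, r: ℝ → ℂ. Suppose γ, g, h are differentiable functions on ℝ satisfying γ' = 2(q h + r g), g' = 2κ g + q(γ + 1), h' = -2κ h + r(γ + 1), and that γ(x), g(x), h(x) all tend to 0 as x → ±∞. Then γ(x) + γ(x)²/2 = 2 g(x) h(x) for every x ∈ ℝ. -/
/-!
The quantity `2 g h - γ²/2 - γ` has derivative zero along the system (the `κ` terms of
`(g h)'` cancel, and the `q`, `r` terms cancel against `(γ²/2 + γ)' = (γ + 1) γ'`), so it is
constant; since it tends to `0` at `+∞`, it vanishes identically.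
-/

open Filter Topology

theorem eq_zero_of_hasDerivAt_zero_of_tendsto_atTop {E : Type*} [NormedAddCommGroup E]
    [NormedSpace ℝ E] {F : ℝ → E} (hF : ∀ x, HasDerivAt F 0 x)
    (hlim : Tendsto F atTop (𝓝 0)) (x : ℝ) : F x = 0 := by
  have hconst : ∀ y, F y = F x :=
    fun y ↦ is_const_of_deriv_eq_zero (fun z ↦ (hF z).differentiableAt) (fun z ↦ (hF z).deriv) y x
  exact tendsto_const_nhds_iff.mp (hlim.congr hconst)

section GreenInvariant

variable {𝕜 : Type*}

def greenInvariant [NormedField 𝕜] (γ g h : ℝ → 𝕜) (x : ℝ) : 𝕜 :=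
  2 * g x * h x - γ x ^ 2 / 2 - γ x

theorem hasDerivAt_greenInvariant [RCLike 𝕜] (c : 𝕜) {q r γ g h : ℝ → 𝕜}
    (hγ : ∀ x, HasDerivAt γ (2 * (q x * h x + r x * g x)) x)
    (hg : ∀ x, HasDerivAt g (c * g x + q x * (γ x + 1)) x)
    (hh : ∀ x, HasDerivAt h (-c * h x + r x * (γ x + 1)) x) (x : ℝ) :
    HasDerivAt (greenInvariant γ g h) 0 x := by
  have hderiv := ((((hg x).const_mul 2).mul (hh x)).sub (((hγ x).pow 2).div_const 2)).sub (hγ x)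
  exact hderiv.congr_deriv (by ring)

theorem tendsto_greenInvariant [NormedField 𝕜] {γ g h : ℝ → 𝕜} {l : Filter ℝ}
    (hγ : Tendsto γ l (𝓝 0)) (hg : Tendsto g l (𝓝 0)) (hh : Tendsto h l (𝓝 0)) :
    Tendsto (greenInvariant γ g h) l (𝓝 0) := by
  unfold greenInvariant
  simpa using (((hg.const_mul 2).mul hh).sub ((hγ.pow 2).div_const 2)).sub hγ

end GreenInvariant

theorem quadratic_identity_green_general (κ : ℝ) (q r : ℝ → ℂ) (γ g h : ℝ → ℂ)
    (hγ : ∀ x : ℝ, HasDerivAt γ (2 * (q x * h x + r x * g x)) x)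
    (hg : ∀ x : ℝ, HasDerivAt g (2 * (κ : ℂ) * g x + q x * (γ x + 1)) x)
    (hh : ∀ x : ℝ, HasDerivAt h (-(2 * (κ : ℂ)) * h x + r x * (γ x + 1)) x)
    (hγtop : Tendsto γ atTop (nhds 0))
    (hgtop : Tendsto g atTop (nhds 0))
    (hhtop : Tendsto h atTop (nhds 0)) :
    ∀ x : ℝ, γ x + γ x ^ 2 / 2 = 2 * g x * h x := by
  intro x
  have hzero : greenInvariant γ g h x = 0 :=
    eq_zero_of_hasDerivAt_zero_of_tendsto_atTop (hasDerivAt_greenInvariant _ hγ hg hh)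
      (tendsto_greenInvariant hγtop hgtop hhtop) x
  unfold greenInvariant at hzero
  linear_combination -hzero

theorem quadratic_identity_green (κ : ℝ) (q r : ℝ → ℂ) (γ g h : ℝ → ℂ)
    (hγ : ∀ x : ℝ, HasDerivAt γ (2 * (q x * h x + r x * g x)) x)
    (hg : ∀ x : ℝ, HasDerivAt g (2 * (κ : ℂ) * g x + q x * (γ x + 1)) x)
    (hh : ∀ x : ℝ, HasDerivAt h (-(2 * (κ : ℂ)) * h x + r x * (γ x + 1)) x)
    (hγtop : Tendsto γ atTop (nhds 0)) (hγbot : Tendsto γ atBot (nhds 0))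
    (hgtop : Tendsto g atTop (nhds 0)) (hgbot : Tendsto g atBot (nhds 0))
    (hhtop : Tendsto h atTop (nhds 0)) (hhbot : Tendsto h atBot (nhds 0)) :
    ∀ x : ℝ, γ x + γ x ^ 2 / 2 = 2 * g x * h x :=
  quadratic_identity_green_general κ q r γ g h hγ hg hh hγtop hgtop hhtop
end

section
/- Let q, r, f: ℝ → ℂ be Schwartz functions. Then d/dθ |_{θ=0} ∫_ℝ [ (q)' (r + θf)' + q² (r + θf)² ] dx = ∫_ℝ f · ( -q'' + 2 q² r ) dx. -/
/-!
For fixed `x` the integrand is a quadratic polynomial in `θ` whose coefficients are products of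
Schwartz functions with functions of temperate growth, hence integrable. The derivative at
`θ = 0` is therefore the integral of the linear coefficient `q' f' + 2 q² r f`, and one
integration by parts turns `∫ q' f'` into `-∫ q'' f`.
-/

open MeasureTheory SchwartzMap

section QuadraticFamily

variable {α E : Type*} [MeasurableSpace α] {μ : Measure α} [NormedAddCommGroup E] [NormedSpace ℝ E]
  {a b c : α → E}

theorem integral_add_smul_add_sq_smul (ha : Integrable a μ) (hb : Integrable b μ)
    (hc : Integrable c μ) (t : ℝ) :
    ∫ x, a x + t • b x + t ^ 2 • c x ∂μ =
      ∫ x, a x ∂μ + t • ∫ x, b x ∂μ + t ^ 2 • ∫ x, c x ∂μ := by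
  rw [integral_add (ha.fun_add (hb.fun_smul t)) (hc.fun_smul _),
    integral_add ha (hb.fun_smul t), integral_smul, integral_smul]

theorem hasDerivAt_integral_add_smul_add_sq_smul (ha : Integrable a μ) (hb : Integrable b μ)
    (hc : Integrable c μ) (t : ℝ) :
    HasDerivAt (fun θ : ℝ => ∫ x, a x + θ • b x + θ ^ 2 • c x ∂μ)
      (∫ x, b x ∂μ + (2 * t) • ∫ x, c x ∂μ) t := by
  simp_rw [integral_add_smul_add_sq_smul ha hb hc]
  convert ((hasDerivAt_const t (∫ x, a x ∂μ)).fun_add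
    ((hasDerivAt_id' t).smul_const (∫ x, b x ∂μ))).fun_add
      ((hasDerivAt_pow 2 t).smul_const (∫ x, c x ∂μ)) using 1
  simp

end QuadraticFamily

namespace SchwartzMap

variable {D 𝕜 : Type*} [RCLike 𝕜] [NormedAddCommGroup D] [NormedSpace ℝ D] [MeasurableSpace D]
  [BorelSpace D] [SecondCountableTopology D] {μ : Measure D} [μ.HasTemperateGrowth]

theorem integrable_mul_of_hasTemperateGrowth {g : D → 𝕜} (hg : g.HasTemperateGrowth)
    (f : 𝓢(D, 𝕜)) : Integrable (fun x => g x * f x) μ := by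
  simpa only [smulLeftCLM_apply hg, smul_eq_mul] using (smulLeftCLM 𝕜 g f).integrable (μ := μ)

theorem deriv_add_const_mul (u v : 𝓢(ℝ, 𝕜)) (c : 𝕜) (x : ℝ) :
    deriv (fun y => u y + c * v y) x = deriv u x + c * deriv v x :=
  ((u.hasDerivAt x).add ((v.hasDerivAt x).const_mul c)).deriv

theorem integral_deriv_mul_deriv (u v : 𝓢(ℝ, 𝕜)) :
    ∫ x, deriv u x * deriv v x = -∫ x, deriv^[2] u x * v x :=
  integral_mul_deriv_eq_neg_deriv_mul (derivCLM ℝ 𝕜 u) v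

end SchwartzMap

theorem NLS_functional_derivative (q r f : SchwartzMap ℝ ℂ) :
    HasDerivAt
      (fun θ : ℝ => ∫ x : ℝ,
        (deriv (⇑q) x * deriv (fun y => r y + (θ : ℂ) * f y) x +
          (q x) ^ 2 * (r x + (θ : ℂ) * f x) ^ 2))
      (∫ x : ℝ, f x * (-(deriv^[2] (⇑q) x) + 2 * (q x) ^ 2 * r x)) 0 := by
  have hexpand (θ : ℝ) :
      (fun x => deriv q x * deriv (fun y => r y + (θ : ℂ) * f y) x +
        q x ^ 2 * (r x + θ * f x) ^ 2) =
      fun x => (deriv q x * deriv r x + q x ^ 2 * r x * r x) +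
        θ • (deriv q x * deriv f x + 2 * q x ^ 2 * r x * f x) + θ ^ 2 • (q x ^ 2 * f x * f x) := by
    ext x
    simp only [deriv_add_const_mul, Complex.real_smul]
    push_cast
    ring
  have hq' : (deriv q).HasTemperateGrowth := (derivCLM ℝ ℂ q).hasTemperateGrowth
  have hq'f' : Integrable (fun x => deriv q x * deriv f x) :=
    integrable_mul_of_hasTemperateGrowth hq' (derivCLM ℝ ℂ f)
  have hq''f : Integrable (fun x => deriv^[2] q x * f x) :=
    integrable_mul_of_hasTemperateGrowth (derivCLM ℝ ℂ (derivCLM ℝ ℂ q)).hasTemperateGrowth f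
  have hq2rf : Integrable (fun x => 2 * q x ^ 2 * r x * f x) :=
    integrable_mul_of_hasTemperateGrowth (by fun_prop) f
  have hibp : ∫ x, (deriv q x * deriv f x + 2 * q x ^ 2 * r x * f x) =
      ∫ x, f x * (-(deriv^[2] q x) + 2 * q x ^ 2 * r x) := by
    rw [integral_add hq'f' hq2rf, integral_deriv_mul_deriv, ← integral_neg,
      ← integral_add hq''f.fun_neg hq2rf]
    congr 1 with x
    ring
  have hconst : Integrable (fun x => deriv q x * deriv r x + q x ^ 2 * r x * r x) :=
    (integrable_mul_of_hasTemperateGrowth hq' (derivCLM ℝ ℂ r)).add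
      (integrable_mul_of_hasTemperateGrowth (by fun_prop) r)
  have hq2ff : Integrable (fun x => q x ^ 2 * f x * f x) :=
    integrable_mul_of_hasTemperateGrowth (by fun_prop) f
  have hquadratic :=
    hasDerivAt_integral_add_smul_add_sq_smul hconst (hq'f'.add hq2rf) hq2ff 0
  simp_rw [hexpand, ← hibp]
  simpa using hquadratic
end

section
/- Let σ < -1/2, let ψ: ℝ → ℂ be a Schwartz function with ∫_ℝ ψ = 0, and for λ ≥ 2 set ψ_λ(x) := λψ(λx). Then there is a constant C = C(ψ, σ) such that ‖ψ_λ‖²_{H^σ(ℝ)} ≤ C (λ^{-1} + λ^{1+2σ}) for all λ ≥ 2, where ‖f‖²_{H^σ} := ∫_ℝ (1+ξ²)^σ |f̂(ξ)|² dξ. -/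
/-!
Put `Φ = 𝓕 ψ`. It is a Schwartz function with `Φ 0 = ∫ ψ = 0`, so `‖Φ η‖ ≤ L |η|` and
`‖Φ η‖ ≤ M`, and the Fourier transform of `ψ_λ` is `ξ ↦ Φ (ξ / λ)`. On `|ξ| ≤ λ` the integrand is
at most `L² ξ² (1 + ξ²)^σ / λ² ≤ L² (1 + λ^(2σ+2)) / λ²`, which over an interval of length `2λ`
gives `2L² (λ⁻¹ + λ^(1+2σ))`. On `|ξ| > λ` it is at most `M² |ξ|^(2σ)`, whose integral is
`2M² λ^(1+2σ) / -(1+2σ)` because `2σ < -1`.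
-/

open MeasureTheory Set
open scoped FourierTransform SchwartzMap

namespace Real

variable {E : Type*} [NormedAddCommGroup E] [NormedSpace ℂ E]

theorem fourier_apply_zero (f : ℝ → E) : 𝓕 f 0 = ∫ x, f x := by
  simp [fourier_real_eq]

theorem fourier_abs_smul_comp_mul_left (f : ℝ → E) {a : ℝ} (ha : a ≠ 0) (ξ : ℝ) :
    𝓕 (fun x => |a| • f (a * x)) ξ = 𝓕 f (ξ / a) := by
  set g : ℝ → E := fun u => 𝐞 (-(u * (ξ / a))) • f u
  have hg : ∀ x, 𝐞 (-(x * ξ)) • |a| • f (a * x) = |a| • g (a * x) := fun x => by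
    rw [smul_comm]
    simp only [g, show a * x * (ξ / a) = x * ξ by field_simp]
  rw [fourier_real_eq, fourier_real_eq]
  simp_rw [hg]
  rw [integral_smul, Measure.integral_comp_mul_left g a, smul_smul, abs_inv,
    mul_inv_cancel₀ (abs_ne_zero.mpr ha), one_smul]

end Real

namespace SchwartzMap

variable {F : Type*} [NormedAddCommGroup F] [NormedSpace ℝ F]

theorem norm_le_seminorm_mul_abs_of_apply_zero (f : 𝓢(ℝ, F)) (h0 : f 0 = 0) (x : ℝ) :
    ‖f x‖ ≤ SchwartzMap.seminorm ℝ 0 1 f * |x| := by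
  have hderiv : ∀ y ∈ univ, ‖deriv f y‖ ≤ SchwartzMap.seminorm ℝ 0 1 f := fun y _ => by
    simpa using le_seminorm' ℝ 0 1 f y
  simpa [h0] using convex_univ.norm_image_sub_le_of_norm_deriv_le
    (fun y _ => f.differentiableAt) hderiv (mem_univ 0) (mem_univ x)

end SchwartzMap

theorem one_add_sq_rpow_le_abs_rpow {σ ξ : ℝ} (hσ : σ ≤ 0) (hξ : ξ ≠ 0) :
    (1 + ξ ^ 2) ^ σ ≤ |ξ| ^ (2 * σ) := by
  calc (1 + ξ ^ 2) ^ σ ≤ (ξ ^ 2) ^ σ :=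
        Real.rpow_le_rpow_of_nonpos (by positivity) (by linarith) hσ
    _ = |ξ| ^ (2 * σ) := by
        rw [← sq_abs, ← Real.rpow_natCast, ← Real.rpow_mul (abs_nonneg ξ)]
        norm_num

theorem one_add_sq_rpow_mul_sq_le {σ lam ξ : ℝ} (hσ : σ ≤ 0) (hlam : 1 ≤ lam) (hξ : |ξ| ≤ lam) :
    (1 + ξ ^ 2) ^ σ * ξ ^ 2 ≤ 1 + lam ^ (2 * σ + 2) := by
  have hlam_pow : 0 ≤ lam ^ (2 * σ + 2) := by positivity
  rcases le_or_gt |ξ| 1 with hsmall | hlarge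
  · have h1 : (1 + ξ ^ 2) ^ σ ≤ 1 := Real.rpow_le_one_of_one_le_of_nonpos (by nlinarith) hσ
    have h2 : ξ ^ 2 ≤ 1 := by nlinarith [sq_abs ξ, abs_nonneg ξ]
    nlinarith [Real.rpow_nonneg (by positivity : (0 : ℝ) ≤ 1 + ξ ^ 2) σ]
  · have hξ0 : ξ ≠ 0 := by rintro rfl; norm_num at hlarge
    have hpow : (1 + ξ ^ 2) ^ σ * ξ ^ 2 ≤ |ξ| ^ (2 * σ + 2) := by
      rw [Real.rpow_add (abs_pos.mpr hξ0), Real.rpow_two, sq_abs]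
      exact mul_le_mul_of_nonneg_right (one_add_sq_rpow_le_abs_rpow hσ hξ0) (by positivity)
    rcases le_or_gt 0 (2 * σ + 2) with hexp | hexp
    · linarith [Real.rpow_le_rpow (abs_nonneg ξ) hξ hexp]
    · linarith [Real.rpow_le_one_of_one_le_of_nonpos hlarge.le hexp.le]

theorem integrable_one_add_sq_rpow {σ : ℝ} (hσ : σ < -1 / 2) :
    Integrable fun ξ : ℝ => (1 + ξ ^ 2) ^ σ := by
  have hdim : (Module.finrank ℝ ℝ : ℝ) < -(2 * σ) := by
    rw [Module.finrank_self, Nat.cast_one]; linarith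
  refine (integrable_rpow_neg_one_add_norm_sq hdim).congr (ae_of_all _ fun ξ => ?_)
  simp only [Real.norm_eq_abs, sq_abs]
  ring_nf

theorem setIntegral_Ioi_le_of_le_rpow {f : ℝ → ℝ} {a s C : ℝ} (ha : 0 < a) (hs : s < -1)
    (hf : IntegrableOn f (Ioi a)) (hle : ∀ x, a < x → f x ≤ C * x ^ s) :
    ∫ x in Ioi a, f x ≤ C * (a ^ (s + 1) / -(s + 1)) := by
  calc ∫ x in Ioi a, f x ≤ ∫ x in Ioi a, C * x ^ s :=
        setIntegral_mono_on hf ((integrableOn_Ioi_rpow_of_lt hs ha).const_mul C)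
          measurableSet_Ioi hle
    _ = C * (a ^ (s + 1) / -(s + 1)) := by
        rw [integral_const_mul, integral_Ioi_rpow_of_lt hs ha, neg_div, div_neg]

theorem setIntegral_compl_Icc_le_of_le_abs_rpow {f : ℝ → ℝ} {a s C : ℝ} (ha : 0 < a)
    (hs : s < -1) (hf : Integrable f) (hle : ∀ x, a < |x| → f x ≤ C * |x| ^ s) :
    ∫ x in (Icc (-a) a)ᶜ, f x ≤ 2 * C * (a ^ (s + 1) / -(s + 1)) := by
  have hcompl : (Icc (-a) a)ᶜ = Iio (-a) ∪ Ioi a := by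
    ext x; simp only [mem_compl_iff, mem_Icc, mem_union, mem_Iio, mem_Ioi, not_and_or, not_le]
  have hdisj : Disjoint (Iio (-a)) (Ioi a) :=
    (Iic_disjoint_Ioi (by linarith)).mono_left Iio_subset_Iic_self
  have hIio : ∫ x in Iio (-a), f x = ∫ x in Ioi a, f (-x) := by
    rw [integral_comp_neg_Ioi, integral_Iic_eq_integral_Iio]
  have hIoi : ∫ x in Ioi a, f x ≤ C * (a ^ (s + 1) / -(s + 1)) :=
    setIntegral_Ioi_le_of_le_rpow ha hs hf.integrableOn fun x hx => by
      simpa [abs_of_pos (ha.trans hx)] using hle x (by rwa [abs_of_pos (ha.trans hx)])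
  have hIoi_neg : ∫ x in Ioi a, f (-x) ≤ C * (a ^ (s + 1) / -(s + 1)) :=
    setIntegral_Ioi_le_of_le_rpow ha hs hf.comp_neg.integrableOn fun x hx => by
      simpa [abs_of_pos (ha.trans hx)] using hle (-x) (by rwa [abs_neg, abs_of_pos (ha.trans hx)])
  rw [hcompl, setIntegral_union hdisj measurableSet_Ioi hf.integrableOn hf.integrableOn, hIio]
  linarith

section ScaledWeightedIntegral

variable {E : Type*} [NormedAddCommGroup E] {Φ : ℝ → E} {σ L M lam : ℝ}

theorem setIntegral_Icc_one_add_sq_rpow_mul_norm_comp_div_sq_le (hσ : σ ≤ 0) (hlam : 1 ≤ lam)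
    (hL : ∀ η, ‖Φ η‖ ≤ L * |η|) :
    ∫ ξ in Icc (-lam) lam, (1 + ξ ^ 2) ^ σ * ‖Φ (ξ / lam)‖ ^ 2 ≤
      2 * L ^ 2 * (lam ^ (-1 : ℝ) + lam ^ (1 + 2 * σ)) := by
  have hlam0 : 0 < lam := by linarith
  have hbound : ∀ ξ ∈ Icc (-lam) lam, ‖(1 + ξ ^ 2) ^ σ * ‖Φ (ξ / lam)‖ ^ 2‖ ≤
      L ^ 2 / lam ^ 2 * (1 + lam ^ (2 * σ + 2)) := by
    intro ξ hξ
    have hΦ : ‖Φ (ξ / lam)‖ ^ 2 ≤ L ^ 2 * ξ ^ 2 / lam ^ 2 := by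
      have := pow_le_pow_left₀ (norm_nonneg _) (hL (ξ / lam)) 2
      rwa [abs_div, abs_of_pos hlam0, mul_pow, div_pow, sq_abs, mul_div_assoc'] at this
    rw [Real.norm_of_nonneg (by positivity)]
    calc (1 + ξ ^ 2) ^ σ * ‖Φ (ξ / lam)‖ ^ 2
        ≤ (1 + ξ ^ 2) ^ σ * (L ^ 2 * ξ ^ 2 / lam ^ 2) := by gcongr
      _ = L ^ 2 / lam ^ 2 * ((1 + ξ ^ 2) ^ σ * ξ ^ 2) := by ring
      _ ≤ L ^ 2 / lam ^ 2 * (1 + lam ^ (2 * σ + 2)) := by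
        gcongr
        exact one_add_sq_rpow_mul_sq_le hσ hlam (abs_le.mpr hξ)
  calc ∫ ξ in Icc (-lam) lam, (1 + ξ ^ 2) ^ σ * ‖Φ (ξ / lam)‖ ^ 2
      ≤ L ^ 2 / lam ^ 2 * (1 + lam ^ (2 * σ + 2)) * volume.real (Icc (-lam) lam) :=
        (le_abs_self _).trans (norm_setIntegral_le_of_norm_le_const measure_Icc_lt_top hbound)
    _ = 2 * L ^ 2 * (lam ^ (-1 : ℝ) + lam ^ (1 + 2 * σ)) := by
        rw [Real.volume_real_Icc_of_le (by linarith), Real.rpow_neg_one,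
          show 2 * σ + 2 = (1 + 2 * σ) + 1 by ring, Real.rpow_add_one hlam0.ne']
        field_simp
        ring

theorem integral_one_add_sq_rpow_mul_norm_comp_div_sq_le (hσ : σ < -1 / 2) (hlam : 1 ≤ lam)
    (hΦ : Continuous Φ) (hL : ∀ η, ‖Φ η‖ ≤ L * |η|) (hM : ∀ η, ‖Φ η‖ ≤ M) :
    ∫ ξ, (1 + ξ ^ 2) ^ σ * ‖Φ (ξ / lam)‖ ^ 2 ≤
      (2 * L ^ 2 + 2 * M ^ 2 / -(1 + 2 * σ)) * (lam ^ (-1 : ℝ) + lam ^ (1 + 2 * σ)) := by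
  have hlam0 : 0 < lam := by linarith
  have hint : Integrable fun ξ : ℝ => (1 + ξ ^ 2) ^ σ * ‖Φ (ξ / lam)‖ ^ 2 := by
    have hcont : Continuous fun ξ : ℝ => (1 + ξ ^ 2) ^ σ * ‖Φ (ξ / lam)‖ ^ 2 :=
      ((continuous_const.add (continuous_pow 2)).rpow_const fun x =>
        Or.inl (by positivity : 1 + x ^ 2 ≠ 0)).mul
        ((hΦ.comp (continuous_id.div_const lam)).norm.pow 2)
    refine ((integrable_one_add_sq_rpow hσ).mul_const (M ^ 2)).mono'
      hcont.aestronglyMeasurable (ae_of_all _ fun ξ => ?_)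
    rw [Real.norm_of_nonneg (by positivity)]
    gcongr
    exact hM _
  have htail : ∫ ξ in (Icc (-lam) lam)ᶜ, (1 + ξ ^ 2) ^ σ * ‖Φ (ξ / lam)‖ ^ 2 ≤
      2 * M ^ 2 * (lam ^ (1 + 2 * σ) / -(1 + 2 * σ)) := by
    rw [add_comm 1]
    refine setIntegral_compl_Icc_le_of_le_abs_rpow hlam0 (by linarith) hint fun ξ hξ => ?_
    have hξ0 : ξ ≠ 0 := by rintro rfl; simp at hξ; linarith
    calc (1 + ξ ^ 2) ^ σ * ‖Φ (ξ / lam)‖ ^ 2 ≤ |ξ| ^ (2 * σ) * M ^ 2 := by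
          gcongr
          exacts [one_add_sq_rpow_le_abs_rpow (by linarith) hξ0, hM _]
      _ = M ^ 2 * |ξ| ^ (2 * σ) := mul_comm _ _
  have hslab :=
    setIntegral_Icc_one_add_sq_rpow_mul_norm_comp_div_sq_le (σ := σ) (by linarith) hlam hL
  have hD : 0 < -(1 + 2 * σ) := by linarith
  rw [← integral_add_compl measurableSet_Icc hint]
  calc _ ≤ 2 * L ^ 2 * (lam ^ (-1 : ℝ) + lam ^ (1 + 2 * σ)) +
        2 * M ^ 2 * (lam ^ (1 + 2 * σ) / -(1 + 2 * σ)) := add_le_add hslab htail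
    _ ≤ _ := by
      rw [mul_div_assoc', mul_div_right_comm, add_mul (2 * L ^ 2)]
      gcongr
      exact le_add_of_nonneg_left (by positivity)

end ScaledWeightedIntegral

theorem mean_zero_scaling_subcritical_bound (σ : ℝ) (hσ : σ < -1/2)
    (ψ : SchwartzMap ℝ ℂ) (h : (∫ x : ℝ, ψ x) = 0) :
    ∃ C : ℝ, ∀ lam : ℝ, 2 ≤ lam →
      (∫ ξ : ℝ, (1 + ξ ^ 2) ^ σ * ‖𝓕 (fun x => (lam : ℂ) * ψ (lam * x)) ξ‖ ^ 2) ≤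
        C * (lam ^ (-1 : ℝ) + lam ^ (1 + 2 * σ)) := by
  set Φ : 𝓢(ℝ, ℂ) := 𝓕 ψ
  have hΦ0 : Φ 0 = 0 := by rw [SchwartzMap.fourier_coe, Real.fourier_apply_zero, h]
  refine ⟨2 * SchwartzMap.seminorm ℝ 0 1 Φ ^ 2 +
    2 * SchwartzMap.seminorm ℝ 0 0 Φ ^ 2 / -(1 + 2 * σ), fun lam hlam => ?_⟩
  have hscale : ∀ ξ, 𝓕 (fun x => (lam : ℂ) * ψ (lam * x)) ξ = Φ (ξ / lam) := fun ξ => by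
    rw [SchwartzMap.fourier_coe, ← Real.fourier_abs_smul_comp_mul_left _ (by positivity) ξ,
      abs_of_pos (by positivity)]
    simp only [Complex.real_smul]
  simp_rw [hscale]
  exact integral_one_add_sq_rpow_mul_norm_comp_div_sq_le hσ (by linarith) Φ.continuous
    (Φ.norm_le_seminorm_mul_abs_of_apply_zero hΦ0) (SchwartzMap.norm_le_seminorm ℝ Φ)
end
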